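/- arXiv:1101.5894 — 4 statements merged into one kernel-verified Lean document; each statement's English description precedes it below -/
import Mathlib

section
/- In any model of SpecRel, relativistic (Minkowski) distance between events is absolute: if inertial observers o and o′ coordinatize the same event at x̄ and x̄′ respectively (i.e., ∀ b, W(o,b,x̄) ↔ W(o′,b,x̄′)), and likewise the same event at ȳ and ȳ′, then μ(x̄,ȳ) = μ(x̄′,ȳ′), where μ(x̄,ȳ) := (x₁−y₁)²+(x₂−y₂)²+(x₃−y₃)² − (x₄−y₄)². -/
def sp2 {Q : Type} [Field Q] [LinearOrder Q] [IsStrictOrderedRing Q] (x y : Fin 4 → Q) : Q :=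
  (x 0 - y 0)^2 + (x 1 - y 1)^2 + (x 2 - y 2)^2

def tm2 {Q : Type} [Field Q] [LinearOrder Q] [IsStrictOrderedRing Q] (x y : Fin 4 → Q) : Q :=
  (x 3 - y 3)^2

def mu {Q : Type} [Field Q] [LinearOrder Q] [IsStrictOrderedRing Q] (x y : Fin 4 → Q) : Q :=
  sp2 x y - tm2 x y

def IOb {B Q : Type} (IB : B → Prop) (W : B → B → (Fin 4 → Q) → Prop) (o : B) : Prop :=
  IB o ∧ ∃ b x, W o b x

structure SpecRel {B Q : Type} [Field Q] [LinearOrder Q] [IsStrictOrderedRing Q]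
    (IB Ph : B → Prop) (W : B → B → (Fin 4 → Q) → Prop) : Prop where
  axSelf : ∀ o, IOb IB W o →
    ∀ x : Fin 4 → Q, (W o o x ↔ x 0 = 0 ∧ x 1 = 0 ∧ x 2 = 0)
  axPh : ∀ o, IOb IB W o → ∀ x y : Fin 4 → Q,
    (∃ p, Ph p ∧ W o p x ∧ W o p y) ↔ sp2 x y = tm2 x y
  axEv : ∀ o o', IOb IB W o → IOb IB W o' →
    ∀ x : Fin 4 → Q, ∃ x' : Fin 4 → Q, ∀ b, W o b x ↔ W o' b x'
  axSymd : ∀ o o' (x y x' y' : Fin 4 → Q), IOb IB W o → IOb IB W o' →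
    x 3 = y 3 → x' 3 = y' 3 →
    (∀ b, W o b x ↔ W o' b x') → (∀ b, W o b y ↔ W o' b y') →
    sp2 x y = sp2 x' y'

/-!
Fix inertial observers `o`, `o'` and let `F` send the coordinates of an event for `o` to its
coordinates for `o'`. An event is determined by its light cone, so `F` is a well-defined
bijection of `Q⁴`, and by `AxPh` it preserves lightlike separation in both directions.

As in the Alexandrov–Zeeman theorem, such a map sends null lines to null lines and parallel
null lines to parallel ones, so after a translation it is additive, and along every null
direction it acts through one and the same field endomorphism `σ`. Comparing images of null
vectors shows that `μ (F z) = k * σ (μ z)` for a constant `k`. Finally `AxSymd`, applied along a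
spacelike direction that is simultaneous for both observers, gives `s ^ 2 = σ s ^ 2`, whence
`σ = id` and `k = 1`.
-/

lemma RingHom.apply_eq_self_of_sq {K : Type*} [Field K] [NeZero (2 : K)] (σ : K →+* K)
    (h : ∀ s, σ s ^ 2 = s ^ 2) (s : K) : σ s = s := by
  have hsign : ∀ s, σ s = s ∨ σ s = -s := fun s => sq_eq_sq_iff_eq_or_eq_neg.mp (h s)
  rcases hsign s with hs | hs
  · exact hs
  have h2 : (2 : K) ≠ 0 := two_ne_zero
  rcases hsign (s + 1) with hs1 | hs1 <;> rw [map_add, map_one, hs] at hs1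
  · have : 2 * s = 0 := by linear_combination -hs1
    rw [hs, (mul_eq_zero.mp this).resolve_left h2, neg_zero]
  · exact absurd (by linear_combination hs1) h2

namespace Minkowski

open Submodule

section CommRing

variable {R : Type*} [CommRing R]

def mink (x y : Fin 4 → R) : R := x 0 * y 0 + x 1 * y 1 + x 2 * y 2 - x 3 * y 3

def minkSq (x : Fin 4 → R) : R := mink x x

lemma mink_comm (x y : Fin 4 → R) : mink x y = mink y x := by
  simp only [mink]; ring

lemma mink_neg_right (x y : Fin 4 → R) : mink x (-y) = -mink x y := by
  simp only [mink, Pi.neg_apply]; ring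

lemma minkSq_add (x y : Fin 4 → R) : minkSq (x + y) = minkSq x + 2 * mink x y + minkSq y := by
  simp only [minkSq, mink, Pi.add_apply]; ring

lemma minkSq_sub (x y : Fin 4 → R) : minkSq (x - y) = minkSq x - 2 * mink x y + minkSq y := by
  simp only [minkSq, mink, Pi.sub_apply]; ring

lemma minkSq_smul (c : R) (x : Fin 4 → R) : minkSq (c • x) = c ^ 2 * minkSq x := by
  simp only [minkSq, mink, Pi.smul_apply, smul_eq_mul]; ring

lemma minkSq_neg (x : Fin 4 → R) : minkSq (-x) = minkSq x := by
  simp only [minkSq, mink, Pi.neg_apply]; ring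

lemma minkSq_smul_add_smul_add (a b : R) (u v w : Fin 4 → R) :
    minkSq (a • u + b • v + w) = a ^ 2 * minkSq u + b ^ 2 * minkSq v + minkSq w
      + 2 * a * b * mink u v + 2 * a * mink u w + 2 * b * mink v w := by
  simp only [minkSq, mink, Pi.add_apply, Pi.smul_apply, smul_eq_mul]; ring

lemma minkSq_add_smul_sub_smul (A U W : Fin 4 → R) (hU : minkSq U = 0) (hW : minkSq W = 0)
    (σ τ : R) : minkSq (A + τ • W - σ • U) =
      minkSq A + 2 * τ * mink W A - 2 * σ * mink U A - 2 * σ * τ * mink U W := by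
  rw [show A + τ • W - σ • U = τ • W + (-σ) • U + A by module, minkSq_smul_add_smul_add, hU, hW,
    mink_comm W U]
  ring

lemma minkSq_smul_add_smul_add_smul_add_smul {a b c d : R} {x y z w : Fin 4 → R}
    (hx : minkSq x = 0) (hy : minkSq y = 0) (hz : minkSq z = 0) (hw : minkSq w = 0) :
    minkSq (a • x + b • y + c • z + d • w) = 2 * (a * b * mink x y + a * c * mink x z
      + a * d * mink x w + b * c * mink y z + b * d * mink y w + c * d * mink z w) := by
  simp only [minkSq, mink, Pi.add_apply, Pi.smul_apply, smul_eq_mul] at *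
  linear_combination a ^ 2 * hx + b ^ 2 * hy + c ^ 2 * hz + d ^ 2 * hw

def periods {V X : Type*} [AddCommGroup V] (g : V → X) : AddSubgroup V where
  carrier := {q | ∀ p, g (p + q) = g p}
  zero_mem' p := by rw [add_zero]
  add_mem' ha hb p := by rw [← add_assoc, hb, ha]
  neg_mem' {a} ha p := by rw [← ha (p + -a), neg_add_cancel_right]

lemma mem_periods {V X : Type*} [AddCommGroup V] {g : V → X} {q : V} :
    q ∈ periods g ↔ ∀ p, g (p + q) = g p := Iff.rfl

lemma apply_add_eq_of_periods_eq_top {V X : Type*} [AddCommGroup V] {g : V → X}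
    (h : periods g = ⊤) (p q : V) : g (p + q) = g p :=
  mem_periods.mp (h ▸ AddSubgroup.mem_top q) p

end CommRing

section Field

variable {K : Type*} [Field K]

lemma eq_smul_of_mem_span {u v : Fin 4 → K} (hu : u 3 ≠ 0) (hv : v ∈ K ∙ u) :
    v = (v 3 / u 3) • u := by
  obtain ⟨c, rfl⟩ := mem_span_singleton.mp hv
  simp [mul_div_cancel_right₀ _ hu]

lemma eq_of_mem_span_of_apply_three_eq_one {u a b : Fin 4 → K} (ha : a 3 = 1) (hb : b 3 = 1)
    (hau : a ∈ K ∙ u) (hbu : b ∈ K ∙ u) : a = b := by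
  obtain ⟨c, rfl⟩ := mem_span_singleton.mp hau
  obtain ⟨d, rfl⟩ := mem_span_singleton.mp hbu
  simp only [Pi.smul_apply, smul_eq_mul] at ha hb
  rw [mul_right_cancel₀ (right_ne_zero_of_mul_eq_one ha) (ha.trans hb.symm)]

def light (j : Fin 3) (ε : K) : Fin 4 → K := Pi.single j.castSucc ε + Pi.single 3 1

lemma light_apply_three (j : Fin 3) (ε : K) : light j ε 3 = 1 := by
  fin_cases j <;> simp [light]

lemma light_ne_zero (j : Fin 3) (ε : K) : light j ε ≠ 0 := fun h => by
  simpa using (light_apply_three j ε).symm.trans (congrFun h 3)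

lemma minkSq_light (j : Fin 3) (ε : K) : minkSq (light j ε) = ε ^ 2 - 1 := by
  fin_cases j <;> simp [light, minkSq, mink] <;> ring

lemma minkSq_light_one (j : Fin 3) : minkSq (light j (1 : K)) = 0 := by simp [minkSq_light]

lemma minkSq_light_neg_one (j : Fin 3) : minkSq (light j (-1 : K)) = 0 := by simp [minkSq_light]

lemma light_not_mem_span_light {j k : Fin 3} {ε δ : K} (h : light j ε ≠ light k δ) :
    light j ε ∉ K ∙ light k δ := fun hmem =>
  h (eq_of_mem_span_of_apply_three_eq_one (light_apply_three _ _) (light_apply_three _ _) hmem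
    (mem_span_singleton_self _))

lemma exists_forall_minkSq_add_smul_sub_smul_eq (A : Fin 4 → K) {U W : Fin 4 → K}
    (hU : minkSq U = 0) (hW : minkSq W = 0) (hUW : mink U W ≠ 0) :
    ∃ σ c : K, ∀ τ : K, minkSq (A + τ • W - σ • U) = c := by
  refine ⟨mink W A / mink U W, minkSq A - 2 * (mink W A / mink U W) * mink U A, fun τ => ?_⟩
  rw [minkSq_add_smul_sub_smul A U W hU hW]
  field_simp
  ring

structure IsLightconeIso (f : (Fin 4 → K) → Fin 4 → K) : Prop where
  bijective : Function.Bijective f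
  minkSq_sub_eq_zero_iff : ∀ a b, minkSq (a - b) = 0 ↔ minkSq (f a - f b) = 0

/-- The factor `c` in `f (p + s • u) - f p = c • f u` (`IsLightconeIso.map_add_smul`), read off
the time coordinate, which is nonzero for the null vector `f u`. -/
def lineCoeff (f : (Fin 4 → K) → Fin 4 → K) (p u : Fin 4 → K) (s : K) : K :=
  (f (p + s • u) - f p) 3 / f u 3

namespace IsLightconeIso

variable {f : (Fin 4 → K) → Fin 4 → K} (hf : IsLightconeIso f)
include hf

lemma translate (b : Fin 4 → K) : IsLightconeIso fun z => f (z + b) - f b := by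
  refine ⟨⟨fun z₁ z₂ h => ?_, fun w => ?_⟩, fun z₁ z₂ => ?_⟩
  · simpa using hf.bijective.injective (sub_left_injective h)
  · obtain ⟨z, hz⟩ := hf.bijective.surjective (w + f b)
    exact ⟨z - b, by simp [hz]⟩
  · simpa [sub_sub_sub_cancel_right] using hf.minkSq_sub_eq_zero_iff (z₁ + b) (z₂ + b)

lemma map_sub_map_ne_zero {a b : Fin 4 → K} (h : a ≠ b) : f a - f b ≠ 0 :=
  sub_ne_zero.mpr (hf.bijective.injective.ne h)

lemma minkSq_map_add_smul_sub_map_eq_zero {u : Fin 4 → K} (hu : minkSq u = 0) (p : Fin 4 → K)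
    (s : K) : minkSq (f (p + s • u) - f p) = 0 :=
  (hf.minkSq_sub_eq_zero_iff _ _).mp (by simp [minkSq_smul, hu])

lemma minkSq_map_add_sub_map_eq_zero {u : Fin 4 → K} (hu : minkSq u = 0) (p : Fin 4 → K) :
    minkSq (f (p + u) - f p) = 0 :=
  (hf.minkSq_sub_eq_zero_iff _ _).mp (by simpa using hu)

variable (hf0 : f 0 = 0)
include hf0

lemma minkSq_map_eq_zero {u : Fin 4 → K} (hu : minkSq u = 0) : minkSq (f u) = 0 := by
  simpa [hf0] using hf.minkSq_map_add_sub_map_eq_zero hu 0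

lemma map_ne_zero {u : Fin 4 → K} (hu0 : u ≠ 0) : f u ≠ 0 := by
  simpa [hf0] using hf.map_sub_map_ne_zero hu0

end IsLightconeIso

end Field

variable {Q : Type*} [Field Q] [LinearOrder Q] [IsStrictOrderedRing Q]

lemma eq_zero_of_sq_add_sq_add_sq_eq_zero {a b c : Q} (h : a ^ 2 + b ^ 2 + c ^ 2 = 0) :
    a = 0 ∧ b = 0 ∧ c = 0 := by
  refine ⟨?_, ?_, ?_⟩ <;> apply pow_eq_zero_iff two_ne_zero |>.mp <;>
    nlinarith [sq_nonneg a, sq_nonneg b, sq_nonneg c]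

lemma apply_three_ne_zero_of_minkSq_eq_zero {u : Fin 4 → Q} (hu : minkSq u = 0) (hu0 : u ≠ 0) :
    u 3 ≠ 0 := by
  intro h3
  obtain ⟨h0, h1, h2⟩ := eq_zero_of_sq_add_sq_add_sq_eq_zero (a := u 0) (b := u 1) (c := u 2)
    (by simp only [minkSq, mink, h3] at hu; linear_combination hu)
  exact hu0 (funext fun i => by fin_cases i <;> assumption)

lemma mem_span_of_minkSq_eq_zero {u v : Fin 4 → Q} (hu : minkSq u = 0) (hv : minkSq v = 0)
    (huv : mink u v = 0) (hu0 : u ≠ 0) : v ∈ Q ∙ u := by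
  have h3 := apply_three_ne_zero_of_minkSq_eq_zero hu hu0
  simp only [minkSq, mink] at hu hv huv
  -- Lagrange's identity for the spatial parts of `u` and `v`
  obtain ⟨e0, e1, e2⟩ := eq_zero_of_sq_add_sq_add_sq_eq_zero
    (a := u 3 * v 0 - v 3 * u 0) (b := u 3 * v 1 - v 3 * u 1) (c := u 3 * v 2 - v 3 * u 2)
    (by linear_combination (u 3 * u 3) * hv + (v 3 * v 3) * hu - 2 * (u 3 * v 3) * huv)
  refine mem_span_singleton.mpr ⟨v 3 / u 3, funext fun i => ?_⟩
  fin_cases i <;> simp <;> field_simp <;> linarith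

lemma eq_zero_of_forall_minkSq_eq_zero {u : Fin 4 → Q}
    (h : ∀ v : Fin 4 → Q, minkSq v = 0 → mink u v = 0) : u = 0 := by
  have h1 := h ![1, 0, 0, 1] (by simp [minkSq, mink])
  have h2 := h ![-1, 0, 0, 1] (by simp [minkSq, mink])
  have h3 := h ![0, 1, 0, 1] (by simp [minkSq, mink])
  have h4 := h ![0, 0, 1, 1] (by simp [minkSq, mink])
  simp [mink] at h1 h2 h3 h4
  funext i; fin_cases i <;> simp <;> linarith

lemma eq_of_forall_minkSq_sub_eq_zero_iff {a b : Fin 4 → Q}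
    (h : ∀ c, minkSq (a - c) = 0 ↔ minkSq (b - c) = 0) : a = b := by
  have hnull : ∀ v, minkSq v = 0 → minkSq (b - a - v) = 0 := fun v hv => by
    simpa [sub_sub] using (h (a + v)).mp (by simpa [minkSq_neg] using hv)
  have hba : minkSq (b - a) = 0 := by simpa using hnull 0 (by simp [minkSq, mink])
  refine (sub_eq_zero.mp (eq_zero_of_forall_minkSq_eq_zero fun v hv => ?_)).symm
  have := hnull v hv
  rw [minkSq_sub, hba, hv] at this
  linear_combination -this / 2

/-- Any null direction off the line `Q ∙ u` may be used: at most one of the six light vectors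
`light j (±1)` lies on that line. -/
lemma periods_eq_top {X : Type*} {g : (Fin 4 → Q) → X} (u : Fin 4 → Q)
    (hg : ∀ v, minkSq v = 0 → v ∉ Q ∙ u → ∀ t : Q, t • v ∈ periods g) : periods g = ⊤ := by
  have hlight : ∀ j ε, (ε = 1 ∨ ε = -1) → light j ε ∉ Q ∙ u → ∀ t : Q, t • light j ε ∈ periods g :=
    fun j ε hε hu => hg _ (by rcases hε with rfl | rfl <;> simp [minkSq_light]) hu
  have same_line : ∀ {j k ε δ}, light j ε ∈ Q ∙ u → light k δ ∈ Q ∙ u → light j ε = light k δ :=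
    eq_of_mem_span_of_apply_three_eq_one (light_apply_three _ _) (light_apply_three _ _)
  have htime_of : ∀ j, light j 1 ∉ Q ∙ u → light j (-1) ∉ Q ∙ u →
      ∀ t : Q, t • Pi.single 3 1 ∈ periods g := fun j hp hm t => by
    have : t • Pi.single 3 1 = (t / 2) • light j 1 + (t / 2) • light j (-1) := by
      funext i; fin_cases j <;> fin_cases i <;> simp [light]
    rw [this]
    exact add_mem (hlight j 1 (.inl rfl) hp _) (hlight j (-1) (.inr rfl) hm _)
  have htime : ∀ t : Q, t • Pi.single 3 1 ∈ periods g := by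
    by_cases h0 : light 0 1 ∉ Q ∙ u ∧ light (0 : Fin 3) (-1 : Q) ∉ Q ∙ u
    · exact htime_of 0 h0.1 h0.2
    obtain ⟨ε, hε0, hε⟩ : ∃ ε : Q, ε ≠ 0 ∧ light 0 ε ∈ Q ∙ u := by
      by_contra! h; exact h0 ⟨h 1 one_ne_zero, h (-1) (neg_ne_zero.mpr one_ne_zero)⟩
    refine htime_of 1 (fun h => ?_) (fun h => ?_) <;>
      exact hε0 (by simpa [light] using congrFun (same_line hε h) 0)
  have hspace : ∀ (j : Fin 3) (t : Q), t • Pi.single j.castSucc 1 ∈ periods g := fun j t => by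
    by_cases hp : light j 1 ∈ Q ∙ u
    · have hm : light j (-1) ∉ Q ∙ u := fun h => by
        have := congrFun (same_line hp h) j.castSucc
        fin_cases j <;> norm_num [light] at this
      have : t • Pi.single j.castSucc 1 = t • Pi.single 3 1 - t • light j (-1) := by
        funext i; fin_cases j <;> fin_cases i <;> simp [light]
      rw [this]; exact sub_mem (htime t) (hlight j (-1) (.inr rfl) hm t)
    · have : t • Pi.single j.castSucc 1 = t • light j 1 - t • Pi.single 3 1 := by
        funext i; fin_cases j <;> fin_cases i <;> simp [light]
      rw [this]; exact sub_mem (hlight j 1 (.inl rfl) hp t) (htime t)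
  refine eq_top_iff.mpr fun q _ => ?_
  have hq : q = ∑ j : Fin 3, q j.castSucc • Pi.single j.castSucc 1 + q 3 • Pi.single 3 1 := by
    funext i; fin_cases i <;> simp [Fin.sum_univ_three]
  rw [hq]
  exact add_mem (sum_mem fun j _ => hspace j _) (htime _)

lemma exists_minkSq_add_smul_sub_smul_eq_zero (A : Fin 4 → Q) {U W : Fin 4 → Q}
    (hU : minkSq U = 0) (hW : minkSq W = 0) (hUW : mink U W ≠ 0) :
    ∃ σ τ : Q, minkSq (A + τ • W - σ • U) = 0 := by
  refine ⟨mink W A / mink U W + 1,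
    (minkSq A - 2 * (mink W A / mink U W + 1) * mink U A) / (2 * mink U W), ?_⟩
  rw [minkSq_add_smul_sub_smul A U W hU hW]
  field_simp
  ring

lemma eq_light_combination (z : Fin 4 → Q) :
    z = ((z 0 + z 3 - z 1 - z 2) / 2) • light 0 1 + ((-z 0 + z 3 - z 1 - z 2) / 2) • light 0 (-1)
      + z 1 • light 1 1 + z 2 • light 2 1 := by
  funext i; fin_cases i <;> simp [light] <;> ring

lemma exists_add_add_eq_zero_and_mul_add_mul_add_mul_eq_zero (x y z : Q) :
    ∃ a b c : Q, (a ≠ b ∨ c ≠ 0) ∧ a + b + c = 0 ∧ a * x + b * y + c * z = 0 := by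
  by_cases h : x = y ∧ y = z
  · obtain ⟨rfl, rfl⟩ := h
    exact ⟨1, -1, 0, .inl (by norm_num), by ring, by ring⟩
  refine ⟨y - z, z - x, x - y, ?_, by ring, by ring⟩
  by_contra! h'
  exact h ⟨by linarith [h'.2], by linarith [h'.1, h'.2]⟩

namespace IsLightconeIso

variable {f : (Fin 4 → Q) → Fin 4 → Q} (hf : IsLightconeIso f)
include hf

/-- The image of a null line `p + Q ∙ u` lies on a null line: its points are pairwise
null-separated, and pairwise null-separated vectors span a null line. -/
lemma map_add_smul_sub_mem_span {u : Fin 4 → Q} (hu : minkSq u = 0) (p : Fin 4 → Q) (s : Q) :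
    f (p + s • u) - f p ∈ Q ∙ (f (p + u) - f p) := by
  rcases eq_or_ne u 0 with rfl | hu0
  · simp
  have hD := hf.minkSq_map_add_sub_map_eq_zero hu p
  have hS := hf.minkSq_map_add_smul_sub_map_eq_zero hu p s
  have hDS : minkSq ((f (p + s • u) - f p) - (f (p + u) - f p)) = 0 := by
    rw [sub_sub_sub_cancel_right, ← hf.minkSq_sub_eq_zero_iff,
      show p + s • u - (p + u) = (s - 1) • u by module, minkSq_smul, hu, mul_zero]
  rw [minkSq_sub, hS, hD] at hDS
  refine mem_span_of_minkSq_eq_zero hD hS ?_ (hf.map_sub_map_ne_zero (by simpa using hu0))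
  rw [mink_comm]; linear_combination -hDS / 2

lemma exists_map_add_smul_eq {u : Fin 4 → Q} (hu : minkSq u = 0) (hu0 : u ≠ 0)
    (p : Fin 4 → Q) (c : Q) : ∃ s : Q, f (p + s • u) = f p + c • (f (p + u) - f p) := by
  obtain ⟨z, hz⟩ := hf.bijective.surjective (f p + c • (f (p + u) - f p))
  have hD := hf.minkSq_map_add_sub_map_eq_zero hu p
  have hzp : minkSq (z - p) = 0 := by
    rw [hf.minkSq_sub_eq_zero_iff, hz, add_sub_cancel_left, minkSq_smul, hD, mul_zero]
  have hzpu : minkSq ((z - p) - u) = 0 := by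
    rw [sub_sub, hf.minkSq_sub_eq_zero_iff, hz,
      show f p + c • (f (p + u) - f p) - f (p + u) = (c - 1) • (f (p + u) - f p) by module,
      minkSq_smul, hD, mul_zero]
  rw [minkSq_sub, hzp, hu] at hzpu
  obtain ⟨s, hs⟩ := mem_span_singleton.mp
    (mem_span_of_minkSq_eq_zero hu hzp (by rw [mink_comm]; linear_combination -hzpu / 2) hu0)
  exact ⟨s, by rw [hs, add_sub_cancel, hz]⟩

variable (hf0 : f 0 = 0)
include hf0

lemma map_smul_mem_span {u : Fin 4 → Q} (hu : minkSq u = 0) (s : Q) : f (s • u) ∈ Q ∙ f u := by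
  simpa [hf0] using hf.map_add_smul_sub_mem_span hu 0 s

lemma exists_map_smul_eq {u : Fin 4 → Q} (hu : minkSq u = 0) (hu0 : u ≠ 0) (c : Q) :
    ∃ s : Q, f (s • u) = c • f u := by
  simpa [hf0] using hf.exists_map_add_smul_eq hu hu0 0 c

lemma mink_map_map_add_sub_map_of_mem_span {u p : Fin 4 → Q} (hu : minkSq u = 0)
    (hpu : p ∈ Q ∙ u) : mink (f u) (f (p + u) - f p) = 0 := by
  obtain ⟨r, rfl⟩ := mem_span_singleton.mp hpu
  have hr1 := hf.map_smul_mem_span hf0 hu (r + 1)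
  rw [add_smul, one_smul] at hr1
  obtain ⟨c, hc⟩ := mem_span_singleton.mp (sub_mem hr1 (hf.map_smul_mem_span hf0 hu r))
  rw [← hc, show mink (f u) (c • f u) = c * minkSq (f u) by simp [minkSq, mink]; ring,
    hf.minkSq_map_eq_zero hf0 hu, mul_zero]

/-- Parallel null lines have parallel images. Otherwise the images `Q ∙ f u` and
`f p + Q ∙ (f (p + u) - f p)` of `Q ∙ u` and `p + Q ∙ u` would be null lines with
non-orthogonal directions, whose null-separated pairs of points do not match those of the two
parallel lines. -/
lemma mink_map_map_add_sub_map {u : Fin 4 → Q} (hu : minkSq u = 0) (hu0 : u ≠ 0)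
    (p : Fin 4 → Q) : mink (f u) (f (p + u) - f p) = 0 := by
  by_cases hpu : p ∈ Q ∙ u
  · exact hf.mink_map_map_add_sub_map_of_mem_span hf0 hu hpu
  have hU := hf.minkSq_map_eq_zero hf0 hu
  set W := f (p + u) - f p
  have hW : minkSq W = 0 := hf.minkSq_map_add_sub_map_eq_zero hu p
  by_contra hUW
  have hline : ∀ t : Q, ∃ τ : Q, f (p + t • u) = f p + τ • W := fun t => by
    obtain ⟨τ, hτ⟩ := mem_span_singleton.mp (hf.map_add_smul_sub_mem_span hu p t)
    exact ⟨τ, by rw [hτ, add_sub_cancel]⟩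
  have hdom : ∀ s t : Q, minkSq (f (p + t • u) - f (s • u)) = 0 ↔
      minkSq p + 2 * (t - s) * mink p u = 0 := fun s t => by
    rw [← hf.minkSq_sub_eq_zero_iff, show p + t • u - s • u = p + (t - s) • u by module,
      minkSq_add, minkSq_smul, hu, show mink p ((t - s) • u) = (t - s) * mink p u by
        simp [mink]; ring]
    constructor <;> intro h <;> linear_combination h
  by_cases hpu0 : mink p u = 0
  · have hp : minkSq p ≠ 0 := fun hp =>
      hpu (mem_span_of_minkSq_eq_zero hu hp (by rwa [mink_comm]) hu0)
    obtain ⟨σ, τ, hστ⟩ := exists_minkSq_add_smul_sub_smul_eq_zero (f p) hU hW hUW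
    obtain ⟨s, hs⟩ := hf.exists_map_smul_eq hf0 hu hu0 σ
    obtain ⟨t, ht⟩ := hf.exists_map_add_smul_eq hu hu0 p τ
    exact hp (by simpa [hpu0] using (hdom s t).mp (by rwa [ht, hs]))
  · obtain ⟨σ, c, hc⟩ := exists_forall_minkSq_add_smul_sub_smul_eq (f p) hU hW hUW
    obtain ⟨s, hs⟩ := hf.exists_map_smul_eq hf0 hu hu0 σ
    obtain ⟨t₀, ht₀⟩ : ∃ t₀, minkSq p + 2 * (t₀ - s) * mink p u = 0 :=
      ⟨s - minkSq p / (2 * mink p u), by field_simp; ring⟩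
    have hnull : ∀ t, minkSq (f (p + t • u) - f (s • u)) = c := fun t => by
      obtain ⟨τ, hτ⟩ := hline t
      rw [hτ, hs, hc]
    have hc0 : c = 0 := by rw [← hnull t₀, hdom, ht₀]
    have h1 := (hdom s (t₀ + 1)).mp (hc0 ▸ hnull (t₀ + 1))
    exact hpu0 (by linear_combination (h1 - ht₀) / 2)

lemma map_add_smul_sub_map_mem_span {u : Fin 4 → Q} (hu : minkSq u = 0) (hu0 : u ≠ 0)
    (p : Fin 4 → Q) (s : Q) : f (p + s • u) - f p ∈ Q ∙ f u := by
  have hle : Q ∙ (f (p + u) - f p) ≤ Q ∙ f u := (span_singleton_le_iff_mem _ _).mpr <|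
    mem_span_of_minkSq_eq_zero (hf.minkSq_map_eq_zero hf0 hu)
      (hf.minkSq_map_add_sub_map_eq_zero hu p)
      (hf.mink_map_map_add_sub_map hf0 hu hu0 p) (hf.map_ne_zero hf0 hu0)
  exact hle (hf.map_add_smul_sub_mem_span hu p s)

lemma map_add_smul {u : Fin 4 → Q} (hu : minkSq u = 0) (hu0 : u ≠ 0) (p : Fin 4 → Q) (s : Q) :
    f (p + s • u) = f p + lineCoeff f p u s • f u := by
  rw [lineCoeff, ← eq_smul_of_mem_span (apply_three_ne_zero_of_minkSq_eq_zero
    (hf.minkSq_map_eq_zero hf0 hu) (hf.map_ne_zero hf0 hu0))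
    (hf.map_add_smul_sub_map_mem_span hf0 hu hu0 p s), add_sub_cancel]

lemma map_not_mem_span {u v : Fin 4 → Q} (hu : minkSq u = 0) (hu0 : u ≠ 0) (hv : v ∉ Q ∙ u) :
    f v ∉ Q ∙ f u := by
  intro hfv
  obtain ⟨c, hc⟩ := mem_span_singleton.mp hfv
  obtain ⟨s, hs⟩ := hf.exists_map_smul_eq hf0 hu hu0 c
  exact hv (mem_span_singleton.mpr ⟨s, hf.bijective.injective (hs.trans hc)⟩)

/-- Moving the base point along a second null direction `v`: the parallelogram
`p, p + s • u, p + t • v, p + s • u + t • v` is mapped to a parallelogram, since `f u` and `f v`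
are linearly independent. -/
lemma lineCoeff_add_smul {u v : Fin 4 → Q} (hu : minkSq u = 0) (hu0 : u ≠ 0) (hv : minkSq v = 0)
    (hvu : v ∉ Q ∙ u) (p : Fin 4 → Q) (t s : Q) :
    lineCoeff f (p + t • v) u s = lineCoeff f p u s := by
  have hv0 : v ≠ 0 := fun h => hvu (h ▸ zero_mem _)
  have hind : LinearIndependent Q ![f u, f v] :=
    (LinearIndependent.pair_iff' (hf.map_ne_zero hf0 hu0)).mpr fun a ha =>
      hf.map_not_mem_span hf0 hu hu0 hvu (mem_span_singleton.mpr ⟨a, ha⟩)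
  have h := hf.map_add_smul hf0 hv hv0 (p + s • u) t
  rw [show p + s • u + t • v = p + t • v + s • u by abel, hf.map_add_smul hf0 hu hu0,
    hf.map_add_smul hf0 hv hv0, hf.map_add_smul hf0 hu hu0, add_assoc, add_assoc,
    add_right_inj, add_comm] at h
  exact (hind.eq_of_pair h).1

lemma lineCoeff_eq_lineCoeff_zero {u : Fin 4 → Q} (hu : minkSq u = 0) (hu0 : u ≠ 0)
    (p : Fin 4 → Q) (s : Q) : lineCoeff f p u s = lineCoeff f 0 u s := by
  have htop : periods (fun p => lineCoeff f p u s) = ⊤ :=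
    periods_eq_top u fun v hv hvu t => mem_periods.mpr fun p =>
      hf.lineCoeff_add_smul hf0 hu hu0 hv hvu p t s
  simpa using apply_add_eq_of_periods_eq_top htop 0 p

lemma map_add (a b : Fin 4 → Q) : f (a + b) = f a + f b := by
  have htop : periods (fun p => f (p + b) - f p) = ⊤ :=
    periods_eq_top 0 fun v hv hv0 t => mem_periods.mpr fun p => by
      replace hv0 : v ≠ 0 := fun h => hv0 (by simp [h])
      rw [add_right_comm, hf.map_add_smul hf0 hv hv0, hf.map_add_smul hf0 hv hv0,
        hf.lineCoeff_eq_lineCoeff_zero hf0 hv hv0, hf.lineCoeff_eq_lineCoeff_zero hf0 hv hv0 p,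
        add_sub_add_right_eq_sub]
  have := apply_add_eq_of_periods_eq_top htop 0 a
  rw [zero_add, zero_add, hf0, sub_zero] at this
  rw [← this, add_sub_cancel]

lemma map_neg (a : Fin 4 → Q) : f (-a) = -f a :=
  (AddMonoidHom.mk' f (hf.map_add hf0)).map_neg a

lemma map_smul_of_null {u : Fin 4 → Q} (hu : minkSq u = 0) (hu0 : u ≠ 0) (s : Q) :
    f (s • u) = lineCoeff f 0 u s • f u := by
  simpa [hf0] using hf.map_add_smul hf0 hu hu0 0 s

lemma lineCoeff_add {u : Fin 4 → Q} (hu : minkSq u = 0) (hu0 : u ≠ 0) (s t : Q) :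
    lineCoeff f 0 u (s + t) = lineCoeff f 0 u s + lineCoeff f 0 u t := by
  apply smul_left_injective Q (hf.map_ne_zero hf0 hu0)
  simp only [← hf.map_smul_of_null hf0 hu hu0, add_smul, hf.map_add hf0]

lemma lineCoeff_sub {u : Fin 4 → Q} (hu : minkSq u = 0) (hu0 : u ≠ 0) (s t : Q) :
    lineCoeff f 0 u (s - t) = lineCoeff f 0 u s - lineCoeff f 0 u t :=
  (AddMonoidHom.mk' _ (hf.lineCoeff_add hf0 hu hu0)).map_sub s t

lemma lineCoeff_zero {u : Fin 4 → Q} (hu : minkSq u = 0) (hu0 : u ≠ 0) :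
    lineCoeff f 0 u 0 = 0 :=
  (AddMonoidHom.mk' _ (hf.lineCoeff_add hf0 hu hu0)).map_zero

lemma lineCoeff_one {u : Fin 4 → Q} (hu : minkSq u = 0) (hu0 : u ≠ 0) : lineCoeff f 0 u 1 = 1 := by
  simp [lineCoeff, hf0, div_self (apply_three_ne_zero_of_minkSq_eq_zero
    (hf.minkSq_map_eq_zero hf0 hu) (hf.map_ne_zero hf0 hu0))]

lemma mink_map_ne_zero {u v : Fin 4 → Q} (hu : minkSq u = 0) (hu0 : u ≠ 0) (hv : minkSq v = 0)
    (hvu : v ∉ Q ∙ u) : mink (f u) (f v) ≠ 0 := fun h =>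
  hf.map_not_mem_span hf0 hu hu0 hvu <| mem_span_of_minkSq_eq_zero
    (hf.minkSq_map_eq_zero hf0 hu) (hf.minkSq_map_eq_zero hf0 hv) h (hf.map_ne_zero hf0 hu0)

/-- Both `a • u + b • v + w` and `a • u + b • v - w` are null; adding the two image equations
cancels the cross terms with `f w`. -/
lemma two_mul_lineCoeff_mul_lineCoeff {u v w : Fin 4 → Q} (hu : minkSq u = 0) (hu0 : u ≠ 0)
    (hv : minkSq v = 0) (hv0 : v ≠ 0) (hwu : mink u w = 0) (hwv : mink v w = 0) {a b : Q}
    (hab : 2 * a * b * mink u v = -minkSq w) :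
    2 * (lineCoeff f 0 u a * lineCoeff f 0 v b) * mink (f u) (f v) = -minkSq (f w) := by
  have hdom : ∀ w', mink u w' = 0 → mink v w' = 0 → minkSq w' = minkSq w →
      minkSq (f (a • u + b • v + w')) = 0 := fun w' hw'u hw'v hw' =>
    hf.minkSq_map_eq_zero hf0 <| by
      rw [minkSq_smul_add_smul_add, hu, hv, hw'u, hw'v, hw']; linear_combination hab
  have hplus := hdom w hwu hwv rfl
  have hminus := hdom (-w) (by rw [mink_neg_right, hwu, neg_zero])
    (by rw [mink_neg_right, hwv, neg_zero]) (minkSq_neg w)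
  simp only [hf.map_add hf0, hf.map_neg hf0, hf.map_smul_of_null hf0 hu hu0,
    hf.map_smul_of_null hf0 hv hv0] at hplus hminus
  rw [minkSq_smul_add_smul_add, hf.minkSq_map_eq_zero hf0 hu, hf.minkSq_map_eq_zero hf0 hv]
    at hplus hminus
  rw [minkSq_neg, mink_neg_right, mink_neg_right] at hminus
  linear_combination (hplus + hminus) / 2

lemma lineCoeff_mul_lineCoeff_eq {u v w : Fin 4 → Q} (hu : minkSq u = 0) (hu0 : u ≠ 0)
    (hv : minkSq v = 0) (hvu : v ∉ Q ∙ u) (hwu : mink u w = 0) (hwv : mink v w = 0)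
    {a b a' b' : Q} (hab : 2 * a * b * mink u v = -minkSq w)
    (hab' : 2 * a' * b' * mink u v = -minkSq w) :
    lineCoeff f 0 u a * lineCoeff f 0 v b = lineCoeff f 0 u a' * lineCoeff f 0 v b' := by
  have hv0 : v ≠ 0 := fun h => hvu (h ▸ zero_mem _)
  have h := (hf.two_mul_lineCoeff_mul_lineCoeff hf0 hu hu0 hv hv0 hwu hwv hab).trans
    (hf.two_mul_lineCoeff_mul_lineCoeff hf0 hu hu0 hv hv0 hwu hwv hab').symm
  have := mul_right_cancel₀ (hf.mink_map_ne_zero hf0 hu hu0 hv hvu) h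
  linear_combination this / 2

lemma lineCoeff_eq_of_map_mul {u v w : Fin 4 → Q} (hu : minkSq u = 0) (hu0 : u ≠ 0)
    (hv : minkSq v = 0) (hvu : v ∉ Q ∙ u) (hwu : mink u w = 0) (hwv : mink v w = 0)
    (hw : minkSq w ≠ 0)
    (hmul : ∀ x y, lineCoeff f 0 u (x * y) = lineCoeff f 0 u x * lineCoeff f 0 u y)
    (x : Q) : lineCoeff f 0 v x = lineCoeff f 0 u x := by
  have hv0 : v ≠ 0 := fun h => hvu (h ▸ zero_mem _)
  rcases eq_or_ne x 0 with rfl | hx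
  · rw [hf.lineCoeff_zero hf0 hv hv0, hf.lineCoeff_zero hf0 hu hu0]
  have huv : mink u v ≠ 0 := fun h => hvu (mem_span_of_minkSq_eq_zero hu hv h hu0)
  have hinv : ∀ y ≠ 0, lineCoeff f 0 u y * lineCoeff f 0 u y⁻¹ = 1 := fun y hy => by
    rw [← hmul, mul_inv_cancel₀ hy, hf.lineCoeff_one hf0 hu hu0]
  obtain ⟨c, hcw⟩ : ∃ c, 2 * c * mink u v = -minkSq w :=
    ⟨-minkSq w / (2 * mink u v), by field_simp⟩
  have hc : c ≠ 0 := by rintro rfl; exact hw (by linear_combination hcw)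
  have h := hf.lineCoeff_mul_lineCoeff_eq hf0 hu hu0 hv hvu hwu hwv (a := c * x⁻¹) (b := x)
    (a' := c) (b' := 1) (by rw [← hcw]; field_simp) (by rw [← hcw]; ring)
  rw [hf.lineCoeff_one hf0 hv hv0, mul_one, hmul] at h
  have hc' := hinv c hc
  have hx' := hinv x hx
  apply mul_left_cancel₀ (left_ne_zero_of_mul_eq_one (mul_comm (lineCoeff f 0 u x) _ ▸ hx'))
  linear_combination lineCoeff f 0 u c⁻¹ * h - lineCoeff f 0 u x⁻¹ * lineCoeff f 0 v x * hc'
    + hc' - hx'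

lemma lineCoeff_light_mul (x r : Q) : lineCoeff f 0 (light 0 1) (x * r) =
    lineCoeff f 0 (light 0 1) x * lineCoeff f 0 (light 0 1) r := by
  have h1 := minkSq_light_one (K := Q) 0
  have hn1 := light_ne_zero (0 : Fin 3) (1 : Q)
  have hsub := hf.lineCoeff_sub hf0 h1 hn1
  have hzero := hf.lineCoeff_zero hf0 h1 hn1
  have hα1 := hf.lineCoeff_one hf0 h1 hn1
  have hβ1 := hf.lineCoeff_one hf0 (minkSq_light_neg_one 0) (light_ne_zero 0 (-1))
  set α := lineCoeff f 0 (light 0 (1 : Q))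
  set β := lineCoeff f 0 (light 0 (-1 : Q))
  -- with `w = 2 q e₁` the admissible pairs `(a, b)` are those on the hyperbola `a * b = q ^ 2`
  have hyp : ∀ q s : Q, s ≠ 0 → α s * β (q ^ 2 / s) = α q * β q := fun q s hs =>
    hf.lineCoeff_mul_lineCoeff_eq hf0 h1 hn1 (minkSq_light_neg_one 0)
      (light_not_mem_span_light fun h => by have := congrFun h 0; norm_num [light] at this)
      (w := Pi.single 1 (2 * q)) (by simp [mink, light]) (by simp [mink, light])
      (by simp [mink, minkSq, light]; field_simp; ring) (by simp [mink, minkSq, light]; ring)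
  have hinv : ∀ s ≠ 0, α s * β (1 / s) = 1 := fun s hs => by
    simpa [hβ1, hα1] using hyp 1 s hs
  have hsq : ∀ q r : Q, r ≠ 0 → α (q ^ 2 * r) = α (q ^ 2) * α r := fun q r hr => by
    rcases eq_or_ne q 0 with rfl | hq
    · simp [hzero]
    have e1 := hyp q (q ^ 2 * r) (by positivity)
    have e2 := hyp q (q ^ 2) (by positivity)
    rw [show q ^ 2 / (q ^ 2 * r) = 1 / r by field_simp] at e1
    rw [div_self (by positivity), hβ1, mul_one] at e2
    linear_combination α r * e1 - α r * e2 - α (q ^ 2 * r) * hinv r hr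
  rcases eq_or_ne r 0 with rfl | hr
  · simp [hzero]
  rw [show x * r = ((x + 1) / 2) ^ 2 * r - ((x - 1) / 2) ^ 2 * r by ring, hsub, hsq _ _ hr,
    hsq _ _ hr, ← sub_mul, ← hsub]
  ring_nf

/-- The common scale of all null directions: the field endomorphism of the Alexandrov–Zeeman
theorem. -/
def scaleHom : Q →+* Q where
  toFun := lineCoeff f 0 (light 0 1)
  map_one' := hf.lineCoeff_one hf0 (minkSq_light_one 0) (light_ne_zero 0 1)
  map_mul' := hf.lineCoeff_light_mul hf0
  map_zero' := hf.lineCoeff_zero hf0 (minkSq_light_one 0) (light_ne_zero 0 1)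
  map_add' := hf.lineCoeff_add hf0 (minkSq_light_one 0) (light_ne_zero 0 1)

lemma lineCoeff_light (j : Fin 3) {ε : Q} (hε : ε = 1 ∨ ε = -1) (s : Q) :
    lineCoeff f 0 (light j ε) s = hf.scaleHom hf0 s := by
  by_cases h01 : light j ε = light 0 1
  · rw [h01]; rfl
  have hnull : minkSq (light j ε) = 0 := by rcases hε with rfl | rfl <;> simp [minkSq_light]
  have key : ∀ w, mink (light 0 1) w = 0 → mink (light j ε) w = 0 → minkSq w ≠ 0 →
      lineCoeff f 0 (light j ε) s = hf.scaleHom hf0 s := fun w h1w hjw hw =>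
    hf.lineCoeff_eq_of_map_mul hf0 (minkSq_light_one 0) (light_ne_zero 0 1) hnull
      (light_not_mem_span_light h01) h1w hjw hw (hf.lineCoeff_light_mul hf0) s
  rcases eq_or_ne j 0 with rfl | hj
  · obtain rfl : ε = -1 := hε.resolve_left (by rintro rfl; exact h01 rfl)
    exact key (Pi.single 1 1) (by simp [mink, light]) (by simp [mink, light])
      (by simp [minkSq, mink])
  · apply key (Pi.single 0 1 + light j ε) <;> fin_cases j <;> rcases hε with rfl | rfl <;>
      simp_all [mink, minkSq, light]

lemma scaleHom_surjective : Function.Surjective (hf.scaleHom hf0) := fun c => by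
  obtain ⟨s, hs⟩ := hf.exists_map_smul_eq hf0 (minkSq_light_one 0) (light_ne_zero 0 1) c
  refine ⟨s, smul_left_injective Q (hf.map_ne_zero hf0 (light_ne_zero 0 (1 : Q))) ?_⟩
  dsimp only
  rw [← hs, hf.map_smul_of_null hf0 (minkSq_light_one 0) (light_ne_zero 0 1)]
  rfl

lemma map_eq_light_combination (z : Fin 4 → Q) :
    f z = hf.scaleHom hf0 ((z 0 + z 3 - z 1 - z 2) / 2) • f (light 0 1)
      + hf.scaleHom hf0 ((-z 0 + z 3 - z 1 - z 2) / 2) • f (light 0 (-1))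
      + hf.scaleHom hf0 (z 1) • f (light 1 1) + hf.scaleHom hf0 (z 2) • f (light 2 1) := by
  conv_lhs => rw [eq_light_combination z]
  simp only [hf.map_add hf0, hf.map_smul_of_null hf0 (minkSq_light_one _) (light_ne_zero _ _),
    hf.map_smul_of_null hf0 (minkSq_light_neg_one _) (light_ne_zero _ _),
    hf.lineCoeff_light hf0 _ (.inl rfl), hf.lineCoeff_light hf0 _ (.inr rfl)]

lemma map_smul (s : Q) (z : Fin 4 → Q) : f (s • z) = hf.scaleHom hf0 s • f z := by
  rw [hf.map_eq_light_combination hf0 (s • z), hf.map_eq_light_combination hf0 z]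
  simp only [Pi.smul_apply, smul_eq_mul, smul_add, smul_smul, ← map_mul]
  congr 4 <;> congr 1 <;> ring

lemma minkSq_map_of_null_combination {u v w : Fin 4 → Q} (hu : minkSq u = 0) (hv : minkSq v = 0)
    (hw : minkSq w = 0) {a b : Q} (h : minkSq (a • u + b • v + w) = 0) :
    hf.scaleHom hf0 a * hf.scaleHom hf0 b * mink (f u) (f v) + hf.scaleHom hf0 a * mink (f u) (f w)
      + hf.scaleHom hf0 b * mink (f v) (f w) = 0 := by
  have := hf.minkSq_map_eq_zero hf0 h
  rw [hf.map_add hf0, hf.map_add hf0, hf.map_smul hf0, hf.map_smul hf0, minkSq_smul_add_smul_add,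
    hf.minkSq_map_eq_zero hf0 hu, hf.minkSq_map_eq_zero hf0 hv,
    hf.minkSq_map_eq_zero hf0 hw] at this
  linear_combination this / 2

/-- The images of the four light vectors have Gram matrix proportional to theirs; the six
relations come from null combinations `a • u + b • v + w` of three of them. -/
lemma mink_map_light :
    mink (f (light 0 1)) (f (light 0 (-1))) = 2 * mink (f (light 1 1)) (f (light 2 1))
    ∧ mink (f (light 0 1)) (f (light 1 1)) = mink (f (light 1 1)) (f (light 2 1))
    ∧ mink (f (light 0 1)) (f (light 2 1)) = mink (f (light 1 1)) (f (light 2 1))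
    ∧ mink (f (light 0 (-1))) (f (light 1 1)) = mink (f (light 1 1)) (f (light 2 1))
    ∧ mink (f (light 0 (-1))) (f (light 2 1)) = mink (f (light 1 1)) (f (light 2 1)) := by
  have h1 := minkSq_light_one (K := Q)
  have h2 := minkSq_light_neg_one (K := Q) 0
  have r1 := hf.minkSq_map_of_null_combination hf0 (h1 0) h2 (h1 1) (a := -1) (b := -1)
    (by simp [minkSq, mink, light])
  have r2 := hf.minkSq_map_of_null_combination hf0 (h1 0) h2 (h1 1) (a := 1) (b := -(1 / 3))
    (by simp [minkSq, mink, light]; norm_num)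
  have r3 := hf.minkSq_map_of_null_combination hf0 (h1 0) (h1 1) (h1 2) (a := 1) (b := -(1 / 2))
    (by simp [minkSq, mink, light]; norm_num)
  have r4 := hf.minkSq_map_of_null_combination hf0 (h1 0) (h1 1) (h1 2) (a := -2) (b := -2)
    (by simp [minkSq, mink, light]; norm_num)
  have r5 := hf.minkSq_map_of_null_combination hf0 h2 (h1 1) (h1 2) (a := 1) (b := -(1 / 2))
    (by simp [minkSq, mink, light]; norm_num)
  have r6 := hf.minkSq_map_of_null_combination hf0 h2 (h1 1) (h1 2) (a := -2) (b := -2)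
    (by simp [minkSq, mink, light]; norm_num)
  simp only [_root_.map_neg, map_one, map_div₀, map_ofNat] at r1 r2 r3 r4 r5 r6
  refine ⟨by linarith, by linarith, by linarith, by linarith, by linarith⟩

lemma minkSq_map_eq_mul_scaleHom (z : Fin 4 → Q) :
    minkSq (f z) = -mink (f (light 1 1)) (f (light 2 1)) * hf.scaleHom hf0 (minkSq z) := by
  obtain ⟨g1, g2, g3, g4, g5⟩ := hf.mink_map_light hf0
  rw [hf.map_eq_light_combination hf0 z]
  set c₁ := (z 0 + z 3 - z 1 - z 2) / 2
  set c₂ := (-z 0 + z 3 - z 1 - z 2) / 2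
  have hz : minkSq z = 2 * (-2 * (c₁ * c₂) - c₁ * z 1 - c₁ * z 2 - c₂ * z 1 - c₂ * z 2
      - z 1 * z 2) := by
    simp only [c₁, c₂, minkSq, mink]; ring
  rw [minkSq_smul_add_smul_add_smul_add_smul
    (hf.minkSq_map_eq_zero hf0 (minkSq_light_one 0))
    (hf.minkSq_map_eq_zero hf0 (minkSq_light_neg_one 0))
    (hf.minkSq_map_eq_zero hf0 (minkSq_light_one 1))
    (hf.minkSq_map_eq_zero hf0 (minkSq_light_one 2)),
    g1, g2, g3, g4, g5, hz]
  simp only [map_mul, map_sub, _root_.map_neg, map_ofNat]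
  ring

/-- The time coordinate of `f` is `scaleHom`-semilinear, hence vanishes at some nonzero vector
of the spacelike hyperplane `d 3 = 0`. -/
lemma exists_apply_three_eq_zero_and_map_apply_three_eq_zero :
    ∃ d : Fin 4 → Q, d 3 = 0 ∧ f d 3 = 0 ∧ minkSq d ≠ 0 := by
  obtain ⟨x, hx⟩ := hf.scaleHom_surjective hf0 (f (light 0 1) 3)
  obtain ⟨y, hy⟩ := hf.scaleHom_surjective hf0 (f (light 0 (-1)) 3)
  obtain ⟨z, hz⟩ := hf.scaleHom_surjective hf0 (f (light 1 1) 3)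
  obtain ⟨a, b, c, habc, hsum, hker⟩ := exists_add_add_eq_zero_and_mul_add_mul_add_mul_eq_zero x y z
  refine ⟨a • light 0 1 + b • light 0 (-1) + c • light 1 1, ?_, ?_, ?_⟩
  · simpa [light] using hsum
  · rw [hf.map_add hf0, hf.map_add hf0, hf.map_smul hf0, hf.map_smul hf0, hf.map_smul hf0]
    simp only [Pi.add_apply, Pi.smul_apply, smul_eq_mul]
    rw [← hx, ← hy, ← hz, ← map_mul, ← map_mul, ← map_mul, ← _root_.map_add, ← _root_.map_add,
      hker, map_zero]
  · have hd : minkSq (a • light 0 1 + b • light 0 (-1) + c • light 1 1) = (a - b) ^ 2 + c ^ 2 := by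
      simp [minkSq, mink, light]
      linear_combination (-(a + b + c)) * hsum
    rw [hd]
    rcases habc with h | h
    · have := sub_ne_zero.mpr h
      positivity
    · positivity

theorem minkSq_map_eq
    (hsim : ∀ a b, a 3 = b 3 → f a 3 = f b 3 → minkSq (a - b) = minkSq (f a - f b))
    (z : Fin 4 → Q) : minkSq (f z) = minkSq z := by
  obtain ⟨d, hd3, hfd3, hd⟩ := hf.exists_apply_three_eq_zero_and_map_apply_three_eq_zero hf0
  set σ := hf.scaleHom hf0
  set k := -mink (f (light 1 1)) (f (light 2 1))
  have hsd : ∀ s, s ^ 2 * minkSq d = k * (σ s ^ 2 * σ (minkSq d)) := fun s => by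
    have := hsim (s • d) 0 (by simp [hd3]) (by simp [hf.map_smul hf0, hf0, hfd3])
    rwa [sub_zero, hf0, sub_zero, hf.minkSq_map_eq_mul_scaleHom hf0, minkSq_smul, map_mul,
      map_pow] at this
  have hk : minkSq d = k * σ (minkSq d) := by simpa using hsd 1
  have hσ : ∀ s, σ s = s := RingHom.apply_eq_self_of_sq σ fun s => by
    have := hsd s
    rw [mul_left_comm, ← hk] at this
    exact (mul_right_cancel₀ hd this).symm
  have hk1 : k = 1 := by
    rw [hσ] at hk
    exact mul_right_cancel₀ hd (hk.symm.trans (one_mul _).symm)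
  rw [hf.minkSq_map_eq_mul_scaleHom hf0, hσ]
  change k * minkSq z = minkSq z
  rw [hk1, one_mul]

end IsLightconeIso

theorem IsLightconeIso.minkSq_map_sub_map {f : (Fin 4 → Q) → Fin 4 → Q} (hf : IsLightconeIso f)
    (hsim : ∀ a b, a 3 = b 3 → f a 3 = f b 3 → minkSq (a - b) = minkSq (f a - f b))
    (a b : Fin 4 → Q) : minkSq (f a - f b) = minkSq (a - b) := by
  have hg := (hf.translate b).minkSq_map_eq (by simp) fun a' b' h3 hg3 => by
    simpa [sub_sub_sub_cancel_right] using
      hsim (a' + b) (b' + b) (by simp [h3]) (by simpa using hg3)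
  simpa using hg (a - b)

end Minkowski

open Minkowski

lemma minkSq_sub_eq_sp2_sub_tm2 {Q : Type} [Field Q] [LinearOrder Q] [IsStrictOrderedRing Q]
    (x y : Fin 4 → Q) : minkSq (x - y) = sp2 x y - tm2 x y := by
  simp only [minkSq, mink, sp2, tm2, Pi.sub_apply]; ring

namespace SpecRel

variable {B Q : Type} [Field Q] [LinearOrder Q] [IsStrictOrderedRing Q] {IB Ph : B → Prop}
  {W : B → B → (Fin 4 → Q) → Prop} (h : SpecRel IB Ph W) {o o' : B}
  (ho : IOb IB W o) (ho' : IOb IB W o')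
include h ho ho'

lemma minkSq_sub_eq_zero_iff {x y x' y' : Fin 4 → Q} (hx : ∀ b, W o b x ↔ W o' b x')
    (hy : ∀ b, W o b y ↔ W o' b y') : minkSq (x - y) = 0 ↔ minkSq (x' - y') = 0 := by
  rw [minkSq_sub_eq_sp2_sub_tm2, minkSq_sub_eq_sp2_sub_tm2, sub_eq_zero, sub_eq_zero,
    ← h.axPh o ho, ← h.axPh o' ho']
  exact exists_congr fun p => and_congr_right fun _ => and_congr (hx p) (hy p)

lemma eq_of_coincide {x x' y' : Fin 4 → Q} (hx : ∀ b, W o b x ↔ W o' b x')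
    (hy : ∀ b, W o b x ↔ W o' b y') : x' = y' := by
  refine eq_of_forall_minkSq_sub_eq_zero_iff fun c' => ?_
  obtain ⟨c, hc⟩ := h.axEv o' o ho' ho c'
  have hc' : ∀ b, W o b c ↔ W o' b c' := fun b => (hc b).symm
  exact (h.minkSq_sub_eq_zero_iff ho ho' hx hc').symm.trans (h.minkSq_sub_eq_zero_iff ho ho' hy hc')

variable {F : (Fin 4 → Q) → Fin 4 → Q} (hF : ∀ x b, W o b x ↔ W o' b (F x))
include hF

lemma isLightconeIso : IsLightconeIso F where
  bijective := by
    refine ⟨fun x₁ x₂ hx => h.eq_of_coincide ho' ho (fun b => (hF x₁ b).symm) fun b => ?_,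
      fun y' => ?_⟩
    · rw [hx]; exact (hF x₂ b).symm
    · obtain ⟨x, hx⟩ := h.axEv o' o ho' ho y'
      exact ⟨x, h.eq_of_coincide ho ho' (hF x) fun b => (hx b).symm⟩
  minkSq_sub_eq_zero_iff a b := h.minkSq_sub_eq_zero_iff ho ho' (hF a) (hF b)

lemma minkSq_sub_eq_of_apply_three_eq (a b : Fin 4 → Q) (hab : a 3 = b 3)
    (hFab : F a 3 = F b 3) : minkSq (a - b) = minkSq (F a - F b) := by
  rw [minkSq_sub_eq_sp2_sub_tm2, minkSq_sub_eq_sp2_sub_tm2, tm2, tm2, hab, hFab,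
    h.axSymd o o' a b (F a) (F b) ho ho' hab hFab (hF a) (hF b), sub_self, sub_self]

end SpecRel

theorem mu_absolute {B Q : Type} [Field Q] [LinearOrder Q] [IsStrictOrderedRing Q]
    (IB Ph : B → Prop) (W : B → B → (Fin 4 → Q) → Prop)
    (h : SpecRel IB Ph W)
    (o o' : B) (x y x' y' : Fin 4 → Q)
    (ho : IOb IB W o) (ho' : IOb IB W o')
    (hx : ∀ b, W o b x ↔ W o' b x')
    (hy : ∀ b, W o b y ↔ W o' b y') :
    mu x y = mu x' y' := by
  choose F hF using h.axEv o o' ho ho'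
  have hFx : F x = x' := h.eq_of_coincide ho ho' (hF x) hx
  have hFy : F y = y' := h.eq_of_coincide ho ho' (hF y) hy
  rw [mu, mu, ← minkSq_sub_eq_sp2_sub_tm2, ← minkSq_sub_eq_sp2_sub_tm2, ← hFx, ← hFy,
    (h.isLightconeIso ho ho' hF).minkSq_map_sub_map (h.minkSq_sub_eq_of_apply_three_eq ho ho' hF)]
end

section
/- In any model of SpecRel, inertial observers move along straight lines uniformly relative to each other: if m and k are inertial observers and W(m,k,x̄), W(m,k,ȳ), W(m,k,z̄) with x₄ < y₄ < z̄₄, then ȳ lies on the line segment through x̄ and z̄, i.e., there is λ ∈ Q with 0 < λ < 1 such that ȳ = x̄ + λ·(z̄ − x̄). -/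
/-!
The worldview transformation from `k` to `m` is a bijection of `Q⁴` preserving lightlike
separation (AxPh, AxEv), and it maps the time axis onto the worldline of `k` seen by `m`
(AxSelf). Such a bijection maps light lines onto light lines, because a light line is the
intersection of the light cones of two of its points. It also keeps parallel light lines
parallel, because two light lines are parallel (and not in a common null plane) exactly when
every point of the first is lightlike separated from exactly one point of the second. Now the
time axis is the diagonal of null parallelograms both in the `t`-`x` plane and in the `t`-`y`
plane, so its image lies in two distinct 2-planes through the image of one of its points, hence
on a line. The time coordinates then force `0 < λ < 1`.
-/

lemma Function.Injective.apply_add_sub_apply_ne_zero {G H : Type*} [AddGroup G] [AddGroup H]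
    {f : G → H} (hf : Function.Injective f) {P d : G} (hd : d ≠ 0) : f (P + d) - f P ≠ 0 :=
  sub_ne_zero.mpr (hf.ne (by simpa using hd))

namespace Minkowski

section Field

variable {Q : Type*} [Field Q]

def normSq (v : Fin 4 → Q) : Q := v 0 ^ 2 + v 1 ^ 2 + v 2 ^ 2 - v 3 ^ 2

def inner (u v : Fin 4 → Q) : Q := u 0 * v 0 + u 1 * v 1 + u 2 * v 2 - u 3 * v 3

def lightCone (u : Fin 4 → Q) : Set (Fin 4 → Q) := {w | normSq (w - u) = 0}

def line (P d : Fin 4 → Q) : Set (Fin 4 → Q) := Set.range fun t : Q => P + t • d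

def timeAxis (t : Q) : Fin 4 → Q := ![0, 0, 0, t]

lemma timeAxis_injective : Function.Injective (timeAxis : Q → Fin 4 → Q) :=
  fun _ _ h => by simpa [timeAxis] using congrFun h 3

lemma notMem_span_singleton_of_ne {p q p' q' : Q} (h : (p, q) ≠ (p', q')) :
    ![p, q, 0, 1] ∉ Q ∙ ![p', q', 0, 1] := by
  rw [Submodule.mem_span_singleton]
  rintro ⟨r, hr⟩
  have h₀ := congrFun hr 0
  have h₁ := congrFun hr 1
  have h₃ := congrFun hr 3
  simp only [Matrix.smul_cons, smul_eq_mul, mul_zero, mul_one, Matrix.smul_empty,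
    Matrix.cons_val] at h₀ h₁ h₃
  subst h₃
  exact h (by simp_all)

lemma inner_comm (u v : Fin 4 → Q) : inner u v = inner v u := by
  simp only [inner]; ring

lemma inner_smul_right (u v : Fin 4 → Q) (t : Q) : inner u (t • v) = t * inner u v := by
  simp only [inner, Pi.smul_apply, smul_eq_mul]; ring

lemma normSq_smul_add_smul (a b : Q) (u v : Fin 4 → Q) :
    normSq (a • u + b • v) = a ^ 2 * normSq u + 2 * a * b * inner u v + b ^ 2 * normSq v := by
  simp only [normSq, inner, Pi.add_apply, Pi.smul_apply, smul_eq_mul]; ring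

lemma normSq_add_smul (u v : Fin 4 → Q) (t : Q) :
    normSq (u + t • v) = normSq u + 2 * t * inner u v + t ^ 2 * normSq v := by
  simpa using normSq_smul_add_smul 1 t u v

lemma normSq_smul (t : Q) (v : Fin 4 → Q) : normSq (t • v) = t ^ 2 * normSq v := by
  simpa using normSq_smul_add_smul t 0 v v

lemma normSq_neg (v : Fin 4 → Q) : normSq (-v) = normSq v := by
  simpa using normSq_smul (-1) v

lemma mem_lightCone_comm {u w : Fin 4 → Q} : w ∈ lightCone u ↔ u ∈ lightCone w := by
  change normSq (w - u) = 0 ↔ normSq (u - w) = 0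
  rw [← neg_sub, normSq_neg]

lemma add_mem_lightCone_iff (P d : Fin 4 → Q) : P + d ∈ lightCone P ↔ normSq d = 0 := by
  simp [lightCone]

lemma line_subset_lightCone {P d : Fin 4 → Q} (hd : normSq d = 0) :
    line P d ⊆ lightCone P := by
  rintro _ ⟨t, rfl⟩
  simp [lightCone, normSq_smul, hd]

lemma eq_zero_or_eq_zero_of_normSq_smul_add_smul [NeZero (2 : Q)] {u v : Fin 4 → Q}
    (hu : normSq u = 0) (hv : normSq v = 0) (huv : inner u v ≠ 0) {a b : Q}
    (h : normSq (a • u + b • v) = 0) : a = 0 ∨ b = 0 := by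
  rw [normSq_smul_add_smul, hu, hv] at h
  have : a * b * (2 * inner u v) = 0 := by linear_combination h
  simpa [huv, NeZero.ne] using this

def UniquePartners (A B : Set (Fin 4 → Q)) : Prop :=
  ∀ p ∈ A, ∃! q, q ∈ B ∧ q ∈ lightCone p

lemma uniquePartners_line_line [NeZero (2 : Q)] {P P' d : Fin 4 → Q} (hd : normSq d = 0)
    (h : inner (P' - P) d ≠ 0) : UniquePartners (line P d) (line P' d) := by
  have hsq : ∀ t s : Q, normSq (P' + s • d - (P + t • d)) =
      normSq (P' - P) + 2 * (s - t) * inner (P' - P) d := fun t s => by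
    rw [show P' + s • d - (P + t • d) = (P' - P) + (s - t) • d by module, normSq_add_smul, hd]
    ring
  rintro _ ⟨t, rfl⟩
  refine ⟨P' + (t - normSq (P' - P) / (2 * inner (P' - P) d)) • d, ⟨⟨_, rfl⟩, ?_⟩, ?_⟩
  · change normSq _ = 0
    rw [hsq]
    field_simp
    ring
  · rintro _ ⟨⟨s, rfl⟩, hs⟩
    change normSq _ = 0 at hs
    rw [hsq] at hs
    congr 1
    field_simp
    linear_combination hs

lemma inner_eq_zero_of_uniquePartners {X X' δ δ' : Fin 4 → Q} (hδ' : normSq δ' = 0)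
    (hδ'0 : δ' ≠ 0) (h : UniquePartners (line X δ) (line X' δ')) : inner δ δ' = 0 := by
  by_contra hne
  set t₀ := inner (X' - X) δ' / inner δ δ'
  have horth : inner (X' - X - t₀ • δ) δ' = 0 := by
    have : inner (X' - X - t₀ • δ) δ' = inner (X' - X) δ' - t₀ * inner δ δ' := by
      simp only [inner, Pi.sub_apply, Pi.smul_apply, smul_eq_mul]; ring
    rw [this, div_mul_cancel₀ _ hne, sub_self]
  -- on the line through `X'`, the separation from `X + t₀ • δ` does not depend on the point
  have hconst : ∀ s : Q, X' + s • δ' ∈ lightCone (X + t₀ • δ) ↔ X' ∈ lightCone (X + t₀ • δ) := by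
    intro s
    change normSq _ = 0 ↔ normSq _ = 0
    rw [show X' + s • δ' - (X + t₀ • δ) = (X' - X - t₀ • δ) + s • δ' by module, normSq_add_smul,
      horth, hδ', show X' - (X + t₀ • δ) = X' - X - t₀ • δ by abel]
    ring_nf
  obtain ⟨_, ⟨⟨s, rfl⟩, hs⟩, huniq⟩ := h _ ⟨t₀, rfl⟩
  have hs₁ := huniq (X' + (s + 1) • δ') ⟨⟨s + 1, rfl⟩, (hconst _).mpr ((hconst s).mp hs)⟩
  apply hδ'0
  simpa [add_smul] using hs₁

def PreservesLightCones (φ : (Fin 4 → Q) ≃ (Fin 4 → Q)) : Prop :=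
  ∀ u v, φ v ∈ lightCone (φ u) ↔ v ∈ lightCone u

namespace PreservesLightCones

variable {φ : (Fin 4 → Q) ≃ (Fin 4 → Q)}

lemma image_lightCone (hφ : PreservesLightCones φ) (u : Fin 4 → Q) :
    φ '' lightCone u = lightCone (φ u) := by
  ext w
  constructor
  · rintro ⟨v, hv, rfl⟩
    exact (hφ u v).mpr hv
  · intro hw
    exact ⟨φ.symm w, (hφ u _).mp (by simpa using hw), φ.apply_symm_apply w⟩

lemma uniquePartners_image (hφ : PreservesLightCones φ) {A B : Set (Fin 4 → Q)}
    (h : UniquePartners A B) : UniquePartners (φ '' A) (φ '' B) := by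
  rintro _ ⟨p, hp, rfl⟩
  obtain ⟨q, ⟨hqB, hqp⟩, huniq⟩ := h p hp
  refine ⟨φ q, ⟨Set.mem_image_of_mem φ hqB, (hφ p q).mpr hqp⟩, ?_⟩
  rintro _ ⟨⟨q', hq', rfl⟩, hq'p⟩
  rw [huniq q' ⟨hq', (hφ p q').mp hq'p⟩]

lemma normSq_sub_eq_zero (hφ : PreservesLightCones φ) {P d : Fin 4 → Q} (hd : normSq d = 0) :
    normSq (φ (P + d) - φ P) = 0 :=
  (hφ P (P + d)).mpr ((add_mem_lightCone_iff P d).mpr hd)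

end PreservesLightCones

end Field

section OrderedField

variable {Q : Type*} [Field Q] [LinearOrder Q] [IsStrictOrderedRing Q]

lemma eq_zero_of_normSq_eq_zero {v : Fin 4 → Q} (hv : normSq v = 0) (h3 : v 3 = 0) :
    v = 0 := by
  simp only [normSq, h3] at hv
  have h0 : v 0 = 0 := by nlinarith [sq_nonneg (v 0), sq_nonneg (v 1), sq_nonneg (v 2)]
  have h1 : v 1 = 0 := by nlinarith [sq_nonneg (v 0), sq_nonneg (v 1), sq_nonneg (v 2)]
  have h2 : v 2 = 0 := by nlinarith [sq_nonneg (v 0), sq_nonneg (v 1), sq_nonneg (v 2)]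
  funext i
  fin_cases i <;> assumption

lemma exists_eq_smul_of_inner_eq_zero {u v : Fin 4 → Q} (hu : normSq u = 0)
    (hv : normSq v = 0) (huv : inner u v = 0) (hu0 : u ≠ 0) : ∃ μ : Q, v = μ • u := by
  have hu3 : u 3 ≠ 0 := fun h3 => hu0 (eq_zero_of_normSq_eq_zero hu h3)
  -- `u 3 • v - v 3 • u` is isotropic with vanishing time component, hence zero
  have hw : normSq (u 3 • v + (-v 3) • u) = 0 := by
    rw [normSq_smul_add_smul, hu, hv, inner_comm, huv]; ring
  have hw3 : (u 3 • v + (-v 3) • u) 3 = 0 := by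
    simp only [Pi.add_apply, Pi.smul_apply, smul_eq_mul]; ring
  refine ⟨v 3 / u 3, funext fun i => ?_⟩
  have hi := congrFun (eq_zero_of_normSq_eq_zero hw hw3) i
  simp only [Pi.add_apply, Pi.smul_apply, smul_eq_mul, Pi.zero_apply] at hi ⊢
  field_simp
  linear_combination hi

lemma lightCone_inter_lightCone {P d : Fin 4 → Q} (hd : normSq d = 0) (hd0 : d ≠ 0) :
    lightCone P ∩ lightCone (P + d) = line P d := by
  ext w
  constructor
  · rintro ⟨h₁, h₂⟩
    have h₂' : normSq ((w - P) + (-1 : Q) • d) = 0 := by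
      rw [← h₂]; congr 1; module
    rw [normSq_add_smul, h₁, hd] at h₂'
    have horth : inner d (w - P) = 0 := by rw [inner_comm]; linear_combination -h₂' / 2
    obtain ⟨μ, hμ⟩ := exists_eq_smul_of_inner_eq_zero hd h₁ horth hd0
    exact ⟨μ, show P + μ • d = w by rw [← hμ, add_sub_cancel]⟩
  · rintro ⟨t, rfl⟩
    refine ⟨line_subset_lightCone hd ⟨t, rfl⟩, ?_⟩
    change normSq _ = 0
    rw [show P + t • d - (P + d) = (t - 1) • d by module, normSq_smul, hd, mul_zero]

lemma inner_eq_zero_of_lightCone_eq {u v : Fin 4 → Q} (h : lightCone u = lightCone v)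
    {d : Fin 4 → Q} (hd : normSq d = 0) : inner (v - u) d = 0 := by
  have hv : normSq (v - u) = 0 := by
    change v ∈ lightCone u
    rw [h]
    simp [lightCone, normSq]
  have hud : normSq ((v - u) + (-1 : Q) • d) = 0 := by
    have : u + d ∈ lightCone v := by rw [← h]; exact (add_mem_lightCone_iff u d).mpr hd
    have h' : normSq (v - (u + d)) = 0 := mem_lightCone_comm.mp this
    rw [← h']; congr 1; module
  rw [normSq_add_smul, hv, hd] at hud
  linear_combination -hud / 2

lemma eq_of_lightCone_eq {u v : Fin 4 → Q} (h : lightCone u = lightCone v) : u = v := by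
  have e₀ := inner_eq_zero_of_lightCone_eq h (d := ![1, 0, 0, 1]) (by simp [normSq])
  have e₁ := inner_eq_zero_of_lightCone_eq h (d := ![-1, 0, 0, 1]) (by simp [normSq])
  have e₂ := inner_eq_zero_of_lightCone_eq h (d := ![0, 1, 0, 1]) (by simp [normSq])
  have e₃ := inner_eq_zero_of_lightCone_eq h (d := ![0, 0, 1, 1]) (by simp [normSq])
  simp only [inner, Pi.sub_apply, Matrix.cons_val, mul_one, mul_zero, mul_neg, add_zero,
    zero_add] at e₀ e₁ e₂ e₃
  have h₀ : u 0 = v 0 := by linarith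
  have h₁ : u 1 = v 1 := by linarith
  have h₂ : u 2 = v 2 := by linarith
  have h₃ : u 3 = v 3 := by linarith
  funext i
  fin_cases i <;> assumption

namespace PreservesLightCones

variable {φ : (Fin 4 → Q) ≃ (Fin 4 → Q)}

lemma image_line (hφ : PreservesLightCones φ) {P d : Fin 4 → Q} (hd : normSq d = 0)
    (hd0 : d ≠ 0) : φ '' line P d = line (φ P) (φ (P + d) - φ P) := by
  rw [← lightCone_inter_lightCone hd hd0, Set.image_inter φ.injective, hφ.image_lightCone,
    hφ.image_lightCone, ← lightCone_inter_lightCone (hφ.normSq_sub_eq_zero hd)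
    (φ.injective.apply_add_sub_apply_ne_zero hd0), add_sub_cancel]

/-- Parallel light lines that do not lie in a common null plane have parallel images. -/
lemma exists_sub_eq_smul_of_inner_ne_zero (hφ : PreservesLightCones φ) {P P' d : Fin 4 → Q}
    (hd : normSq d = 0) (h : inner (P' - P) d ≠ 0) :
    ∃ μ : Q, φ (P' + d) - φ P' = μ • (φ (P + d) - φ P) := by
  have hd0 : d ≠ 0 := by rintro rfl; simp [inner] at h
  have hδ0 := φ.injective.apply_add_sub_apply_ne_zero (P := P) hd0
  have hU := hφ.uniquePartners_image (uniquePartners_line_line hd h)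
  rw [hφ.image_line hd hd0, hφ.image_line hd hd0] at hU
  exact exists_eq_smul_of_inner_eq_zero (hφ.normSq_sub_eq_zero hd) (hφ.normSq_sub_eq_zero hd)
    (inner_eq_zero_of_uniquePartners (hφ.normSq_sub_eq_zero hd)
      (φ.injective.apply_add_sub_apply_ne_zero hd0) hU) hδ0

lemma sub_ne_smul (hφ : PreservesLightCones φ) {P w w' : Fin 4 → Q} (hw : normSq w = 0)
    (hw0 : w ≠ 0) (hw' : w' ∉ Q ∙ w) (ν : Q) :
    φ (P + w') - φ P ≠ ν • (φ (P + w) - φ P) := by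
  intro heq
  have hmem : φ (P + w') ∈ φ '' line P w := by
    rw [hφ.image_line hw hw0]
    exact ⟨ν, show φ P + ν • _ = _ by rw [← heq]; abel⟩
  obtain ⟨r, hr⟩ := φ.injective.mem_set_image.mp hmem
  exact hw' (Submodule.mem_span_singleton.mpr ⟨r, add_left_cancel hr⟩)

lemma inner_sub_ne_zero (hφ : PreservesLightCones φ) {P w w' : Fin 4 → Q} (hw : normSq w = 0)
    (hw0 : w ≠ 0) (hw' : normSq w' = 0) (hww' : w' ∉ Q ∙ w) :
    inner (φ (P + w) - φ P) (φ (P + w') - φ P) ≠ 0 := fun h0 =>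
  have ⟨μ, hμ⟩ := exists_eq_smul_of_inner_eq_zero (hφ.normSq_sub_eq_zero hw)
    (hφ.normSq_sub_eq_zero hw') h0 (φ.injective.apply_add_sub_apply_ne_zero hw0)
  hφ.sub_ne_smul hw hw0 hww' μ hμ

lemma sub_notMem_span (hφ : PreservesLightCones φ) {P w₁ w₂ w₃ : Fin 4 → Q}
    (h₁ : normSq w₁ = 0) (h₂ : normSq w₂ = 0) (h₃ : normSq w₃ = 0) (hw₁ : w₁ ≠ 0)
    (h₂₁ : w₂ ∉ Q ∙ w₁) (h₃₁ : w₃ ∉ Q ∙ w₁) (h₃₂ : w₃ ∉ Q ∙ w₂) :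
    φ (P + w₃) - φ P ∉ Submodule.span Q {φ (P + w₁) - φ P, φ (P + w₂) - φ P} := by
  have hw₂ : w₂ ≠ 0 := by rintro rfl; exact h₂₁ (Submodule.zero_mem _)
  intro hmem
  obtain ⟨a, b, hab⟩ := Submodule.mem_span_pair.mp hmem
  have hsq := hφ.normSq_sub_eq_zero (P := P) h₃
  rw [← hab] at hsq
  rcases eq_zero_or_eq_zero_of_normSq_smul_add_smul (hφ.normSq_sub_eq_zero h₁)
    (hφ.normSq_sub_eq_zero h₂) (hφ.inner_sub_ne_zero h₁ hw₁ h₂ h₂₁) hsq with rfl | rfl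
  · exact hφ.sub_ne_smul h₂ hw₂ h₃₂ b (by rw [← hab, zero_smul, zero_add])
  · exact hφ.sub_ne_smul h₁ hw₁ h₃₁ a (by rw [← hab, zero_smul, add_zero])

lemma add_smul_add_smul_sub_mem_span (hφ : PreservesLightCones φ) {P w w' : Fin 4 → Q}
    (hw : normSq w = 0) (hw' : normSq w' = 0) (hww' : inner w w' ≠ 0) {α : Q} (hα : α ≠ 0)
    (β : Q) :
    φ (P + α • w + β • w') - φ P ∈ Submodule.span Q {φ (P + w) - φ P, φ (P + w') - φ P} := by
  have hw0 : w ≠ 0 := by rintro rfl; simp [inner] at hww'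
  have hw'0 : w' ≠ 0 := by rintro rfl; simp [inner] at hww'
  obtain ⟨s, hs⟩ : φ (P + α • w) ∈ line (φ P) (φ (P + w) - φ P) := by
    rw [← hφ.image_line hw hw0]; exact ⟨_, ⟨α, rfl⟩, rfl⟩
  obtain ⟨s', hs'⟩ : φ (P + α • w + β • w') ∈
      line (φ (P + α • w)) (φ (P + α • w + w') - φ (P + α • w)) := by
    rw [← hφ.image_line hw' hw'0]; exact ⟨_, ⟨β, rfl⟩, rfl⟩
  obtain ⟨μ, hμ⟩ := hφ.exists_sub_eq_smul_of_inner_ne_zero (P := P) (P' := P + α • w) hw' (by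
    rw [add_sub_cancel_left, inner_comm, inner_smul_right, inner_comm]
    exact mul_ne_zero hα hww')
  refine Submodule.mem_span_pair.mpr ⟨s, s' * μ, ?_⟩
  dsimp only at hs hs'
  rw [← hs', hμ, ← hs]
  module

lemma timeAxis_sub_mem_span (hφ : PreservesLightCones φ) {p q a t : Q}
    (hpq : p ^ 2 + q ^ 2 = 1) (ht : t ≠ a) :
    φ (timeAxis t) - φ (timeAxis a) ∈ Submodule.span Q
      {φ (timeAxis a + ![p, q, 0, 1]) - φ (timeAxis a),
        φ (timeAxis a + ![-p, -q, 0, 1]) - φ (timeAxis a)} := by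
  have hdecomp : timeAxis t = timeAxis a + ((t - a) / 2) • ![p, q, 0, 1] +
      ((t - a) / 2) • ![-p, -q, 0, 1] := by
    funext i
    fin_cases i <;> simp [timeAxis, add_assoc]
  have hinner : inner ![p, q, 0, 1] ![-p, -q, 0, 1] = -2 := by
    simp only [inner, Matrix.cons_val]
    linear_combination -hpq
  have hnull : ∀ p q : Q, p ^ 2 + q ^ 2 = 1 → normSq ![p, q, 0, 1] = 0 := fun p q hpq => by
    simp only [normSq, Matrix.cons_val]
    linear_combination hpq
  rw [hdecomp]
  exact hφ.add_smul_add_smul_sub_mem_span (hnull p q hpq) (hnull (-p) (-q) (by simpa using hpq))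
    (by rw [hinner]; norm_num) (div_ne_zero (sub_ne_zero.mpr ht) two_ne_zero) _

theorem exists_timeAxis_sub_eq_smul (hφ : PreservesLightCones φ) {a b c : Q} (hb : b ≠ a)
    (hc : c ≠ a) :
    ∃ μ : Q, φ (timeAxis b) - φ (timeAxis a) = μ • (φ (timeAxis c) - φ (timeAxis a)) := by
  set D : (Fin 4 → Q) → Fin 4 → Q := fun w => φ (timeAxis a + w) - φ (timeAxis a)
  set Vx := Submodule.span Q {D ![1, 0, 0, 1], D ![-1, 0, 0, 1]}
  set Vy := Submodule.span Q {D ![0, 1, 0, 1], D ![0, -1, 0, 1]}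
  have hmem : ∀ t ≠ a, φ (timeAxis t) - φ (timeAxis a) ∈ Vx ⊓ Vy := fun t ht =>
    Submodule.mem_inf.mpr
      ⟨by simpa only [neg_zero] using hφ.timeAxis_sub_mem_span (p := 1) (q := 0) (by norm_num) ht,
        by simpa only [neg_zero] using hφ.timeAxis_sub_mem_span (p := 0) (q := 1) (by norm_num) ht⟩
  have hc0 : φ (timeAxis c) - φ (timeAxis a) ≠ 0 :=
    sub_ne_zero.mpr (φ.injective.ne (timeAxis_injective.ne hc))
  have hlt : Vx ⊓ Vy < Vy := inf_lt_right.mpr fun hle =>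
    hφ.sub_notMem_span (by simp [normSq]) (by simp [normSq]) (by simp [normSq])
      (fun h => by simpa using congrFun h 3) (notMem_span_singleton_of_ne (by norm_num))
      (notMem_span_singleton_of_ne (by norm_num)) (notMem_span_singleton_of_ne (by norm_num))
      (hle (Submodule.subset_span (Set.mem_insert _ _)))
  have hrank : Module.finrank Q ↥(Vx ⊓ Vy) ≤
      Module.finrank Q ↥(Q ∙ (φ (timeAxis c) - φ (timeAxis a))) := by
    rw [finrank_span_singleton hc0]
    have h₁ := Submodule.finrank_lt_finrank_of_lt hlt
    have h₂ : Module.finrank Q Vy ≤ 2 := by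
      classical
      exact (finrank_span_le_card _).trans (by simp [Finset.card_le_two])
    omega
  have heq := Submodule.eq_of_le_of_finrank_le
    ((Submodule.span_singleton_le_iff_mem _ _).mpr (hmem c hc)) hrank
  obtain ⟨μ, hμ⟩ := Submodule.mem_span_singleton.mp (heq ▸ hmem b hb)
  exact ⟨μ, hμ.symm⟩

end PreservesLightCones

end OrderedField

end Minkowski

namespace SpecRel

open Minkowski

variable {B Q : Type} [Field Q] [LinearOrder Q] [IsStrictOrderedRing Q] {IB Ph : B → Prop}
  {W : B → B → (Fin 4 → Q) → Prop}

lemma mem_lightCone_iff (h : SpecRel IB Ph W) {o : B} (ho : IOb IB W o) (x y : Fin 4 → Q) :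
    y ∈ lightCone x ↔ ∃ p, Ph p ∧ W o p x ∧ W o p y := by
  rw [h.axPh o ho x y]
  change normSq (y - x) = 0 ↔ _
  simp only [normSq, sp2, tm2, Pi.sub_apply]
  constructor <;> intro hxy <;> linear_combination hxy

lemma eq_of_forall_W_iff (h : SpecRel IB Ph W) {o : B} (ho : IOb IB W o) {x y : Fin 4 → Q}
    (hxy : ∀ b, W o b x ↔ W o b y) : x = y :=
  eq_of_lightCone_eq <| Set.ext fun w => by simp only [h.mem_lightCone_iff ho, hxy]

lemma exists_worldview_equiv (h : SpecRel IB Ph W) {m k : B} (hm : IOb IB W m)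
    (hk : IOb IB W k) : ∃ φ : (Fin 4 → Q) ≃ (Fin 4 → Q),
      PreservesLightCones φ ∧ ∀ u b, W k b u ↔ W m b (φ u) := by
  choose f hf using h.axEv k m hk hm
  choose g hg using h.axEv m k hm hk
  let φ : (Fin 4 → Q) ≃ (Fin 4 → Q) :=
    { toFun := f
      invFun := g
      left_inv := fun u =>
        h.eq_of_forall_W_iff hk fun b => (hg (f u) b).symm.trans (hf u b).symm
      right_inv := fun x =>
        h.eq_of_forall_W_iff hm fun b => (hf (g x) b).symm.trans (hg x b).symm }
  refine ⟨φ, fun u v => ?_, hf⟩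
  rw [h.mem_lightCone_iff hm, h.mem_lightCone_iff hk]
  exact exists_congr fun p => by rw [hf u p, hf v p]; rfl

lemma exists_timeAxis_eq (h : SpecRel IB Ph W) {m k : B} (hk : IOb IB W k)
    {φ : (Fin 4 → Q) ≃ (Fin 4 → Q)} (hφ : ∀ u b, W k b u ↔ W m b (φ u)) {x : Fin 4 → Q}
    (hx : W m k x) : ∃ t, φ (timeAxis t) = x := by
  refine ⟨φ.symm x 3, ?_⟩
  obtain ⟨h₀, h₁, h₂⟩ :=
    (h.axSelf k hk _).mp ((hφ (φ.symm x) k).mpr (by rwa [φ.apply_symm_apply]))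
  conv_rhs => rw [← φ.apply_symm_apply x]
  congr 1
  funext i
  fin_cases i <;> simp [timeAxis, h₀, h₁, h₂]

end SpecRel

theorem inertial_observers_move_uniformly {B Q : Type} [Field Q] [LinearOrder Q] [IsStrictOrderedRing Q]
    (IB Ph : B → Prop) (W : B → B → (Fin 4 → Q) → Prop)
    (h : SpecRel IB Ph W)
    (m k : B) (x y z : Fin 4 → Q)
    (hm : IOb IB W m) (hk : IOb IB W k)
    (hx : W m k x) (hy : W m k y) (hz : W m k z)
    (hxy : x 3 < y 3) (hyz : y 3 < z 3) :
    ∃ l : Q, 0 < l ∧ l < 1 ∧ y = fun i => x i + l * (z i - x i) := by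
  obtain ⟨φ, hφ, hW⟩ := h.exists_worldview_equiv hm hk
  obtain ⟨a, ha⟩ := h.exists_timeAxis_eq hk hW hx
  obtain ⟨b, hb⟩ := h.exists_timeAxis_eq hk hW hy
  obtain ⟨c, hc⟩ := h.exists_timeAxis_eq hk hW hz
  have hba : b ≠ a := by rintro rfl; exact hxy.ne (congrFun (ha.symm.trans hb) 3)
  have hca : c ≠ a := by rintro rfl; exact (hxy.trans hyz).ne (congrFun (ha.symm.trans hc) 3)
  obtain ⟨μ, hμ⟩ := hφ.exists_timeAxis_sub_eq_smul hba hca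
  rw [ha, hb, hc] at hμ
  have h₃ : y 3 - x 3 = μ * (z 3 - x 3) := by simpa using congrFun hμ 3
  refine ⟨μ, ?_, ?_, funext fun i => ?_⟩
  · by_contra! hμ0
    nlinarith
  · by_contra! hμ1
    nlinarith
  · have hi : y i - x i = μ * (z i - x i) := by simpa using congrFun hμ i
    linear_combination hi
end

section
/- The restriction of the induction/supremum scheme IND to the language of ordered fields is equivalent to real-closedness: a linearly ordered field Q in which every nonempty bounded-above subset definable (with parameters) by a first-order formula in the language {+, ·, <} has a least upper bound is a real closed field. -/
/-!
If the set `{x | p x ≤ 0}` of a polynomial `p` is nonempty, bounded above and has a supremum `u`,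
then `p u = 0`: polynomials are continuous for the order topology, the set is closed, and every
point to the right of `u` lies in the closed set `{x | 0 ≤ p x}`. The set is definable with the
coefficients of `p` as parameters, so this applies to `X ^ 2 - q` for `q ≥ 0` and to every
odd-degree polynomial with positive leading coefficient, which takes negative values and tends
to `+∞`.
-/

open FirstOrder Language

attribute [local instance] FirstOrder.Ring.compatibleRingOfRing
  FirstOrder.Language.orderStructure

open Filter Polynomial Set

theorem Continuous.apply_eq_of_isLUB_setOf_le {α β : Type*} [LinearOrder α] [TopologicalSpace α]
    [OrderTopology α] [DenselyOrdered α] [NoMaxOrder α] [LinearOrder β] [TopologicalSpace β]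
    [OrderClosedTopology β] {f : α → β} (hf : Continuous f) {c : β} {u : α}
    (hu : IsLUB {x | f x ≤ c} u) (hne : {x | f x ≤ c}.Nonempty) : f u = c := by
  refine le_antisymm (hu.mem_of_isClosed hne (isClosed_le hf continuous_const)) ?_
  have hIoi : Ioi u ⊆ {x | c ≤ f x} := fun x hx =>
    le_of_lt (not_le.mp fun hle => (hu.1 hle).not_gt hx)
  have hu_mem : u ∈ closure (Ioi u) := by
    rw [closure_Ioi' nonempty_Ioi]; exact mem_Ici.2 le_rfl
  exact closure_minimal hIoi (isClosed_le continuous_const hf) hu_mem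

namespace Polynomial

variable {R : Type*} [Field R] [LinearOrder R] [IsStrictOrderedRing R]

theorem tendsto_eval_atTop_of_leadingCoeff_pos {p : R[X]} (hdeg : 0 < p.degree)
    (hp : 0 < p.leadingCoeff) : Tendsto (fun x => p.eval x) atTop atTop := by
  revert hp
  refine degree_pos_induction_on (P := fun p => 0 < p.leadingCoeff →
    Tendsto (fun x => p.eval x) atTop atTop) p hdeg ?_ ?_ ?_
  · intro a _ ha
    simp only [eval_mul, eval_C, eval_X]
    exact tendsto_id.const_mul_atTop (by simpa using ha)
  · intro p _ ih hp
    simp only [eval_mul, eval_X]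
    exact (ih (by simpa using hp)).atTop_mul_atTop₀ tendsto_id
  · intro p a hdeg ih hp
    simp only [eval_add, eval_C]
    rw [leadingCoeff_add_of_degree_lt' (degree_C_le.trans_lt hdeg)] at hp
    exact tendsto_atTop_add_const_right _ _ (ih hp)

theorem bddAbove_setOf_eval_nonpos {p : R[X]} (hdeg : 0 < p.degree) (hp : 0 < p.leadingCoeff) :
    BddAbove {x | p.eval x ≤ 0} := by
  obtain ⟨M, hM⟩ := eventually_atTop.mp
    ((tendsto_eval_atTop_of_leadingCoeff_pos hdeg hp).eventually_gt_atTop 0)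
  exact ⟨M, fun x hx => le_of_lt (not_le.mp fun hMx => (hM x hMx).not_ge hx)⟩

theorem exists_eval_neg_of_odd_natDegree {p : R[X]} (hodd : Odd p.natDegree)
    (hp : 0 < p.leadingCoeff) : ∃ x, p.eval x < 0 := by
  set q := -p.comp (-X)
  have hdeg : 0 < q.degree := by
    simpa [q, natDegree_pos_iff_degree_pos] using hodd.pos
  have hq : 0 < q.leadingCoeff := by simpa [q, hodd.neg_one_pow] using hp
  obtain ⟨x, hx⟩ :=
    ((tendsto_eval_atTop_of_leadingCoeff_pos hdeg hq).eventually_gt_atTop 0).exists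
  exact ⟨-x, by simpa [q] using hx⟩

end Polynomial

instance {R : Type*} [Add R] [Mul R] [Neg R] [One R] [Zero R] [LE R] :
    (Language.ring.sum Language.order).OrderedStructure R :=
  ⟨fun _ => Iff.rfl⟩

theorem definable₁_setOf_eval_nonpos {R : Type*} [CommRing R] [LE R] (p : R[X]) :
    (univ : Set R).Definable₁ (Language.ring.sum Language.order) {x | p.eval x ≤ 0} := by
  rw [Set.Definable₁, Set.definable_iff_exists_formula_sum]
  let t : FreeCommRing (((univ : Set R) ⊕ Fin 1) ⊕ Fin 0) :=
    p.sum fun n a => .of (.inl (.inl ⟨a, trivial⟩)) * .of (.inl (.inr 0)) ^ n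
  refine ⟨Term.le (LHom.sumInl.onTerm (Ring.termOfFreeCommRing t))
    (LHom.sumInl.onTerm (Ring.termOfFreeCommRing 0)), ?_⟩
  ext w
  simp [t, Formula.Realize, Term.realize_le, LHom.realize_onTerm, eval_eq_sum, Polynomial.sum_def]

section DefinableSupremum

variable {Q : Type} [Field Q] [LinearOrder Q] [IsStrictOrderedRing Q]

theorem Polynomial.eval_eq_zero_of_isLUB_setOf_eval_nonpos {p : Q[X]} {u : Q}
    (hu : IsLUB {x | p.eval x ≤ 0} u) (hne : ∃ x, p.eval x ≤ 0) : p.eval u = 0 := by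
  let : TopologicalSpace Q := Preorder.topology Q
  have : OrderTopology Q := ⟨rfl⟩
  exact p.continuous.apply_eq_of_isLUB_setOf_le hu hne

theorem exists_eval_eq_zero_of_definable_sup
    (hsup : ∀ S : Set Q, (univ : Set Q).Definable₁ (Language.ring.sum Language.order) S →
      S.Nonempty → BddAbove S → ∃ u : Q, IsLUB S u)
    {p : Q[X]} (hdeg : 0 < p.degree) (hp : 0 < p.leadingCoeff) (hne : ∃ x, p.eval x ≤ 0) :
    ∃ x, p.eval x = 0 := by
  obtain ⟨u, hu⟩ :=
    hsup _ (definable₁_setOf_eval_nonpos p) hne (bddAbove_setOf_eval_nonpos hdeg hp)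
  exact ⟨u, eval_eq_zero_of_isLUB_setOf_eval_nonpos hu hne⟩

end DefinableSupremum

theorem definable_supremum_implies_real_closed {Q : Type} [Field Q] [LinearOrder Q] [IsStrictOrderedRing Q]
    (hsup : ∀ S : Set Q,
      (Set.univ : Set Q).Definable₁ (Language.ring.sum Language.order) S →
      S.Nonempty → BddAbove S → ∃ u : Q, IsLUB S u) :
    (∀ q : Q, 0 ≤ q → ∃ r : Q, r ^ 2 = q) ∧
    (∀ p : Polynomial Q, Odd p.natDegree → ∃ x : Q, Polynomial.eval x p = 0) := by
  refine ⟨fun q hq => ?_, fun p hodd => ?_⟩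
  · have hdeg : 0 < (X ^ 2 - C q).degree := by rw [degree_X_pow_sub_C two_pos]; decide
    obtain ⟨r, hr⟩ := exists_eval_eq_zero_of_definable_sup hsup hdeg
      (by rw [leadingCoeff_X_pow_sub_C two_pos]; exact one_pos) ⟨0, by simpa using hq⟩
    exact ⟨r, by simpa [sub_eq_zero] using hr⟩
  wlog hp : 0 < p.leadingCoeff generalizing p
  · have hp' : 0 < (-p).leadingCoeff := by
      rw [leadingCoeff_neg, neg_pos]
      exact (not_lt.mp hp).lt_of_ne (by simpa using ne_zero_of_natDegree_gt hodd.pos)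
    obtain ⟨x, hx⟩ := this (-p) (by rwa [natDegree_neg]) hp'
    exact ⟨x, by simpa using hx⟩
  have hdeg : 0 < p.degree := natDegree_pos_iff_degree_pos.mp hodd.pos
  obtain ⟨x, hx⟩ := exists_eval_neg_of_odd_natDegree hodd hp
  exact exists_eval_eq_zero_of_definable_sup hsup hdeg hp ⟨x, hx.le⟩
end

section
/- Existence of faster-than-light motion is inconsistent with SpecRel for inertial observers but the axioms of SpecRel without AxPh do not imply NoFTL: there exists a model satisfying AxField, AxSelf, AxEv, AxSymd in which some inertial observer moves faster than light relative to another (i.e., there are inertial m, k and points x̄, ȳ on k's worldline in m's worldview with (x₁−y₁)²+(x₂−y₂)²+(x₃−y₃)² > (x₄−y₄)²). -/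
/-!
In Newtonian kinematics, observers are related by Galilean transformations
`(p, t) ↦ (p + a + t • v, t)`: an event is pinned down by the bodies through it (one at rest
there fixes the place, a moving one the time), so two observers assign coordinates to the
same event exactly by such a map. These maps preserve simultaneity and the spatial distance of
simultaneous events, so AxSelf, AxEv and AxSymd hold. Nothing bounds relative velocities,
and without photons AxPh is the only axiom that could have singled out speed `1`; a body
moving with velocity `(1, 1, 1)` relative to another is faster than light.
-/

lemma sp2_eq_sum {Q : Type} [Field Q] [LinearOrder Q] [IsStrictOrderedRing Q]
    (x y : Fin 4 → Q) : sp2 x y = ∑ i, (Fin.init x - Fin.init y) i ^ 2 := by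
  simp [sp2, Fin.sum_univ_three, Fin.init]

lemma tm2_eq {Q : Type} [Field Q] [LinearOrder Q] [IsStrictOrderedRing Q]
    (x y : Fin 4 → Q) : tm2 x y = (x (Fin.last 3) - y (Fin.last 3)) ^ 2 :=
  rfl

lemma Fin.init_eq_zero_iff {α : Type*} [Zero α] (x : Fin 4 → α) :
    Fin.init x = 0 ↔ x 0 = 0 ∧ x 1 = 0 ∧ x 2 = 0 := by
  simp [funext_iff, Fin.forall_fin_succ, Fin.init]

/-- A body of Newtonian kinematics, moving uniformly along `t ↦ pos + t • vel`. -/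
structure Body where
  vel : Fin 3 → ℝ
  pos : Fin 3 → ℝ

namespace Body

/-- The position of `b` at time `t` in the rest frame of `o`. -/
def relPos (o b : Body) (t : ℝ) : Fin 3 → ℝ :=
  b.pos - o.pos + t • (b.vel - o.vel)

/-- `worldview o b x`: observer `o` sees `b` at the event `x`, whose last coordinate is time. -/
def worldview (o b : Body) (x : Fin 4 → ℝ) : Prop :=
  Fin.init x = relPos o b (x (Fin.last 3))

@[simp]
lemma relPos_self (o : Body) (t : ℝ) : relPos o o t = 0 := by
  simp [relPos]

lemma relPos_add_relPos (o o' b : Body) (t : ℝ) :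
    relPos o' o t + relPos o b t = relPos o' b t := by
  simp only [relPos]
  module

lemma worldview_snoc (o b : Body) (p : Fin 3 → ℝ) (t : ℝ) :
    worldview o b (Fin.snoc p t) ↔ p = relPos o b t := by
  rw [worldview, Fin.init_snoc, Fin.snoc_last]

lemma worldview_self_iff (o : Body) (x : Fin 4 → ℝ) :
    worldview o o x ↔ Fin.init x = 0 := by
  simp [worldview]

lemma isInertial (o : Body) : IOb (fun _ => True) worldview o :=
  ⟨trivial, o, 0, (worldview_self_iff o 0).2 rfl⟩

/-- The Galilean transformation from the coordinates of `o` to those of `o'`. -/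
def galilei (o o' : Body) (x : Fin 4 → ℝ) : Fin 4 → ℝ :=
  Fin.snoc (Fin.init x + relPos o' o (x (Fin.last 3))) (x (Fin.last 3))

lemma worldview_galilei (o o' b : Body) (x : Fin 4 → ℝ) :
    worldview o' b (galilei o o' x) ↔ worldview o b x := by
  rw [galilei, worldview_snoc, worldview, ← relPos_add_relPos o o' b, add_comm (Fin.init x), add_right_inj]

lemma init_galilei_sub_init_galilei (o o' : Body) {x y : Fin 4 → ℝ}
    (h : x (Fin.last 3) = y (Fin.last 3)) :
    Fin.init (galilei o o' x) - Fin.init (galilei o o' y) = Fin.init x - Fin.init y := by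
  simp only [galilei, Fin.init_snoc, h]
  abel

/-- The body that `o` sees passing through the event `x` with velocity `v`. -/
def throughEvent (o : Body) (x : Fin 4 → ℝ) (v : Fin 3 → ℝ) : Body :=
  ⟨o.vel + v, o.pos + Fin.init x - x (Fin.last 3) • v⟩

lemma worldview_throughEvent (o : Body) (x : Fin 4 → ℝ) (v : Fin 3 → ℝ) (y : Fin 4 → ℝ) :
    worldview o (throughEvent o x v) y ↔
      Fin.init y = Fin.init x + (y (Fin.last 3) - x (Fin.last 3)) • v := by
  have : relPos o (throughEvent o x v) (y (Fin.last 3)) =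
      Fin.init x + (y (Fin.last 3) - x (Fin.last 3)) • v := by
    simp only [relPos, throughEvent]
    module
  rw [worldview, this]

lemma eq_of_forall_worldview_iff {o : Body} {x y : Fin 4 → ℝ}
    (h : ∀ b, worldview o b x ↔ worldview o b y) : x = y := by
  have hpos : Fin.init y = Fin.init x := by
    have hrest := (h (throughEvent o x 0)).1 ((worldview_throughEvent ..).2 (by simp))
    rwa [worldview_throughEvent, smul_zero, add_zero] at hrest
  have htime : y (Fin.last 3) = x (Fin.last 3) := by
    have hmove := (h (throughEvent o x 1)).1 ((worldview_throughEvent ..).2 (by simp))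
    rw [worldview_throughEvent, hpos, left_eq_add, smul_eq_zero, sub_eq_zero] at hmove
    exact hmove.resolve_right one_ne_zero
  rw [← Fin.snoc_init_self x, ← Fin.snoc_init_self y, hpos, htime]

lemma eq_galilei_of_forall_worldview_iff {o o' : Body} {x x' : Fin 4 → ℝ}
    (h : ∀ b, worldview o b x ↔ worldview o' b x') : x' = galilei o o' x :=
  eq_of_forall_worldview_iff fun b => (h b).symm.trans (worldview_galilei o o' b x).symm

lemma exists_faster_than_light :
    ∃ (m k : Body) (x y : Fin 4 → ℝ),
      worldview m k x ∧ worldview m k y ∧ sp2 x y > tm2 x y := by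
  refine ⟨⟨0, 0⟩, ⟨1, 0⟩, Fin.snoc 0 0, Fin.snoc 1 1, ?_, ?_, ?_⟩
  · simp [worldview_snoc, relPos]
  · simp [worldview_snoc, relPos]
  · rw [sp2_eq_sum, tm2_eq, Fin.init_snoc, Fin.init_snoc, Fin.snoc_last, Fin.snoc_last]
    norm_num

end Body

open Body in
theorem noFTL_independent_of_specrel_minus_axph :
    ∃ (B : Type) (IB Ph : B → Prop) (W : B → B → (Fin 4 → ℝ) → Prop),
      (∀ o, IOb IB W o →
        ∀ x : Fin 4 → ℝ, (W o o x ↔ x 0 = 0 ∧ x 1 = 0 ∧ x 2 = 0)) ∧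
      (∀ o o', IOb IB W o → IOb IB W o' →
        ∀ x : Fin 4 → ℝ, ∃ x' : Fin 4 → ℝ, ∀ b, W o b x ↔ W o' b x') ∧
      (∀ o o' (x y x' y' : Fin 4 → ℝ), IOb IB W o → IOb IB W o' →
        x 3 = y 3 → x' 3 = y' 3 →
        (∀ b, W o b x ↔ W o' b x') → (∀ b, W o b y ↔ W o' b y') →
        sp2 x y = sp2 x' y') ∧
      (∃ (m k : B) (x y : Fin 4 → ℝ), IOb IB W m ∧ IOb IB W k ∧
        W m k x ∧ W m k y ∧ sp2 x y > tm2 x y) := by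
  refine ⟨Body, fun _ => True, fun _ => False, worldview, ?_, ?_, ?_, ?_⟩
  · intro o _ x
    rw [worldview_self_iff, Fin.init_eq_zero_iff]
  · exact fun o o' _ _ x => ⟨galilei o o' x, fun b => (worldview_galilei o o' b x).symm⟩
  · intro o o' x y x' y' _ _ hxy _ hx hy
    rw [eq_galilei_of_forall_worldview_iff hx, eq_galilei_of_forall_worldview_iff hy,
      sp2_eq_sum, sp2_eq_sum, init_galilei_sub_init_galilei o o' hxy]
  · obtain ⟨m, k, x, y, hx, hy, hfast⟩ := exists_faster_than_light
    exact ⟨m, k, x, y, isInertial m, isInertial k, hx, hy, hfast⟩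
end
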